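/- arXiv:1904.02525 — 8 statements merged into one kernel-verified Lean document; each statement's English description precedes it below -/
import Mathlib

section
/- Let n ≥ 2 and let e_1, …, e_n be the standard basis of ℝ^n. Consider the simple roots of type D_n, namely δ_i = e_i − e_{i+1} for 1 ≤ i ≤ n−1 and δ_n = e_{n−1} + e_n. For every a = (a_1, …, a_n) ∈ ℝ^n the following are equivalent: (1) a is a linear combination of δ_1, …, δ_n with nonnegative real coefficients; (2) Σ_{i=1}^{k} a_i ≥ 0 for every 1 ≤ k ≤ n−2, and Σ_{i=1}^{n−1} a_i ≥ a_n, and Σ_{i=1}^{n−1} a_i ≥ −a_n. -/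
/-!
Partial sums `S_k = ∑_{i ≤ k} a_i` determine `a`. For `a = ∑ x_i δ_i + y δ_last` in dimension
`n + 2` they are `S_k = x_k` for `k < n`, `S_n = x_n + y` and `S_{n+1} = 2y`, so the coefficients
are forced to be `x_k = S_k`, `x_n = (S_n - a_{n+1}) / 2` and `y = (S_n + a_{n+1}) / 2`, and the
stated inequalities say precisely that these are nonnegative.
-/

open Finset

namespace Fin

variable {M : Type*} [AddCommGroup M] {m : ℕ}

lemma Iic_succ_eq_insert (j : Fin m) : Iic j.succ = insert j.succ (Iic j.castSucc) := by
  ext i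
  simp only [mem_Iic, mem_insert, le_def, Fin.ext_iff, val_castSucc, val_succ]
  omega

lemma sum_Iic_succ (v : Fin (m + 1) → M) (j : Fin m) :
    ∑ i ∈ Iic j.succ, v i = ∑ i ∈ Iic j.castSucc, v i + v j.succ := by
  rw [Iic_succ_eq_insert, sum_insert (by simp), add_comm]

lemma sum_Iic_single (j k : Fin m) (c : M) :
    ∑ i ∈ Iic k, Pi.single j c i = if j ≤ k then c else 0 := by
  simp [sum_pi_single']

lemma sum_Iic_single_castSucc_sub_single_succ (j : Fin m) (k : Fin (m + 1)) (c : M) :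
    ∑ i ∈ Iic k, (Pi.single j.castSucc c - Pi.single j.succ c : Fin (m + 1) → M) i =
      if j.castSucc = k then c else 0 := by
  simp only [Pi.sub_apply, sum_sub_distrib, sum_Iic_single]
  rcases lt_trichotomy j.castSucc k with h | h | h
  · rw [if_pos h.le, if_pos (castSucc_lt_iff_succ_le.mp h), if_neg h.ne, sub_self]
  · rw [if_pos h.le, if_neg (h ▸ not_le.mpr castSucc_lt_succ), if_pos h, sub_zero]
  · rw [if_neg (not_le.mpr h), if_neg (not_le.mpr (h.trans castSucc_lt_succ)), if_neg h.ne',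
      sub_zero]

lemma funext_of_sum_Iic {v w : Fin (m + 1) → M}
    (h : ∀ k, ∑ i ∈ Iic k, v i = ∑ i ∈ Iic k, w i) : v = w := by
  funext j
  cases j using Fin.cases with
  | zero => simpa [← bot_eq_zero, Iic_bot] using h ⊥
  | succ j =>
    have := h j.succ
    rwa [sum_Iic_succ, sum_Iic_succ, h j.castSucc, add_left_cancel_iff] at this

end Fin

def simpleRootCombD (n : ℕ) (x : Fin (n + 1) → ℝ) (y : ℝ) : Fin (n + 2) → ℝ :=
  (∑ i : Fin (n + 1), x i • (Pi.single i.castSucc (1 : ℝ) - Pi.single i.succ (1 : ℝ)))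
    + y • ((Pi.single (Fin.last n).castSucc (1 : ℝ) : Fin (n + 2) → ℝ)
      + (Pi.single (Fin.last (n + 1)) (1 : ℝ) : Fin (n + 2) → ℝ))

namespace simpleRootCombD

variable {n : ℕ} (x : Fin (n + 1) → ℝ) (y : ℝ)

lemma sum_Iic (k : Fin (n + 2)) :
    ∑ i ∈ Iic k, simpleRootCombD n x y i =
      (∑ j, if j.castSucc = k then x j else 0) +
        ((if (Fin.last n).castSucc ≤ k then y else 0) +
          if Fin.last (n + 1) ≤ k then y else 0) := by
  simp only [simpleRootCombD, Pi.add_apply, Finset.sum_apply, Pi.smul_apply, smul_eq_mul,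
    sum_add_distrib, ← mul_sum]
  rw [sum_comm]
  congr 1
  · refine sum_congr rfl fun j _ => ?_
    rw [← mul_sum, Fin.sum_Iic_single_castSucc_sub_single_succ, mul_ite, mul_one, mul_zero]
  · rw [Fin.sum_Iic_single, Fin.sum_Iic_single, mul_add, mul_ite, mul_ite, mul_one, mul_zero]

lemma sum_Iic_castSucc_castSucc (j : Fin n) :
    ∑ i ∈ Iic j.castSucc.castSucc, simpleRootCombD n x y i = x j.castSucc := by
  simp [sum_Iic, Fin.castSucc_inj]

lemma sum_Iic_castSucc_last :
    ∑ i ∈ Iic (Fin.last n).castSucc, simpleRootCombD n x y i = x (Fin.last n) + y := by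
  simp [sum_Iic, Fin.castSucc_inj]

lemma sum_Iic_last :
    ∑ i ∈ Iic (Fin.last (n + 1)), simpleRootCombD n x y i = 2 * y := by
  simp [sum_Iic, Fin.le_last, two_mul]

lemma apply_last : simpleRootCombD n x y (Fin.last (n + 1)) = y - x (Fin.last n) := by
  have h := sum_Iic_last x y
  rw [← Fin.succ_last, Fin.sum_Iic_succ, Fin.succ_last, sum_Iic_castSucc_last] at h
  linarith

end simpleRootCombD

noncomputable def coeffD {n : ℕ} (a : Fin (n + 2) → ℝ) : Fin (n + 1) → ℝ :=
  Fin.lastCases ((∑ i ∈ Iic (Fin.last n).castSucc, a i - a (Fin.last (n + 1))) / 2)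
    fun j => ∑ i ∈ Iic j.castSucc.castSucc, a i

lemma simpleRootCombD_coeffD {n : ℕ} (a : Fin (n + 2) → ℝ) :
    simpleRootCombD n (coeffD a)
      ((∑ i ∈ Iic (Fin.last n).castSucc, a i + a (Fin.last (n + 1))) / 2) = a := by
  refine Fin.funext_of_sum_Iic fun k => ?_
  induction k using Fin.lastCases with
  | last =>
    rw [simpleRootCombD.sum_Iic_last, ← Fin.succ_last, Fin.sum_Iic_succ, Fin.succ_last]
    ring
  | cast k =>
    induction k using Fin.lastCases with
    | last =>
      rw [simpleRootCombD.sum_Iic_castSucc_last, coeffD, Fin.lastCases_last]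
      ring
    | cast j => rw [simpleRootCombD.sum_Iic_castSucc_castSucc, coeffD, Fin.lastCases_castSucc]

/-- Indexing is 0-based in dimension `n + 2`: `δ_i = e_i - e_{i+1}` for `i : Fin (n + 1)` and the
last simple root is `e_n + e_{n+1}`. -/
theorem statement2 (n : ℕ) (a : Fin (n + 2) → ℝ) :
    (∃ (x : Fin (n + 1) → ℝ) (y : ℝ), (∀ i, 0 ≤ x i) ∧ 0 ≤ y ∧
        a = (∑ i : Fin (n + 1),
              x i • (Pi.single i.castSucc (1 : ℝ) - Pi.single i.succ (1 : ℝ)))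
            + y • ((Pi.single (Fin.last n).castSucc (1 : ℝ) : Fin (n + 2) → ℝ)
              + (Pi.single (Fin.last (n + 1)) (1 : ℝ) : Fin (n + 2) → ℝ))) ↔
    ((∀ k : Fin n, 0 ≤ ∑ i ∈ Finset.Iic k.castSucc.castSucc, a i) ∧
      a (Fin.last (n + 1)) ≤ ∑ i ∈ Finset.Iic (Fin.last n).castSucc, a i ∧
      -a (Fin.last (n + 1)) ≤ ∑ i ∈ Finset.Iic (Fin.last n).castSucc, a i) := by
  change (∃ (x : Fin (n + 1) → ℝ) (y : ℝ), (∀ i, 0 ≤ x i) ∧ 0 ≤ y ∧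
    a = simpleRootCombD n x y) ↔ _
  constructor
  · rintro ⟨x, y, hx, hy, rfl⟩
    have hlast := hx (Fin.last n)
    refine ⟨fun k => ?_, ?_, ?_⟩
    · rw [simpleRootCombD.sum_Iic_castSucc_castSucc]
      exact hx _
    all_goals rw [simpleRootCombD.sum_Iic_castSucc_last, simpleRootCombD.apply_last]; linarith
  · rintro ⟨hk, hpos, hneg⟩
    refine ⟨coeffD a, _, fun j => ?_, by linarith, (simpleRootCombD_coeffD a).symm⟩
    induction j using Fin.lastCases with
    | last => rw [coeffD, Fin.lastCases_last]; linarith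
    | cast j => rw [coeffD, Fin.lastCases_castSucc]; exact hk j
end

section
/- Let 𝔞_1, 𝔟_1, 𝔞_2, 𝔟_2 ∈ ℝ with 𝔞_1 − 𝔟_1 ∈ ℕ, 𝔞_2 − 𝔟_2 ∈ ℕ, 𝔞_1 − 𝔞_2 ∈ ℤ, and 𝔞_1 > 𝔞_2 > 𝔟_1 > 𝔟_2 (so the two linear segments (𝔞_1, …, 𝔟_1) and (𝔞_2, …, 𝔟_2) are linked). Set N = (𝔞_1 − 𝔟_1 + 1) + (𝔞_2 − 𝔟_2 + 1). Let λ ∈ ℝ^N be the concatenation of the constant block of value (𝔞_1+𝔟_1)/2 and length 𝔞_1 − 𝔟_1 + 1 with the constant block of value (𝔞_2+𝔟_2)/2 and length 𝔞_2 − 𝔟_2 + 1. Let λ′ ∈ ℝ^N be the concatenation of the constant blocks of value (𝔞_1+𝔟_2)/2 (length 𝔞_1 − 𝔟_2 + 1) and of value (𝔞_2+𝔟_1)/2 (length 𝔞_2 − 𝔟_1 + 1), arranged so that the block of larger (or equal) value comes first. Then λ′ ≤_P λ: the total sums of λ and λ′ agree and Σ_{i=1}^{k} (λ_i − λ′_i)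 ≥ 0 for every 1 ≤ k ≤ N. In other words, replacing two linked segments by their union (𝔞_1, …, 𝔟_2) and intersection (𝔞_2, …, 𝔟_1) yields a smaller Langlands parameter. -/
/-!
The first block of `lam` has value `(a₁ + b₁) / 2`, which is at least both values
`(a₁ + b₂) / 2` and `(a₂ + b₁) / 2` of `lam'`, while the second block has value
`(a₂ + b₂) / 2`, which is at most both of them. So `lam - lam'` is nonnegative up to the end
of the first block and nonpositive afterwards; since its total is zero, every prefix sum is
nonnegative. The totals agree because a constant block of value `(a + b) / 2` and length
`a - b + 1` has the same sum as the segment `(a, …, b)`, and union and intersection of the two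
segments have the same elements, with multiplicity, as the two segments.
-/

open Finset

theorem sum_fin_ite_val_lt {M : Type*} [AddCommMonoid M] {n t m : ℕ} (h : t + m = n) (x y : M) :
    ∑ i : Fin n, (if (i : ℕ) < t then x else y) = t • x + m • y := by
  subst h
  simp [Fin.sum_univ_add]

theorem sum_Iic_nonneg_of_nonneg_of_nonpos {ι M : Type*} [Fintype ι] [LinearOrder ι]
    [LocallyFiniteOrderBot ι] [AddCommGroup M] [PartialOrder M] [IsOrderedAddMonoid M]
    {δ : ι → M} (t : ι) (hlt : ∀ i < t, 0 ≤ δ i) (hge : ∀ i, t ≤ i → δ i ≤ 0)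
    (hsum : ∑ i, δ i = 0) (k : ι) : 0 ≤ ∑ i ∈ Iic k, δ i := by
  by_cases hk : k < t
  · exact sum_nonneg fun i hi => hlt i ((mem_Iic.mp hi).trans_lt hk)
  · have hsplit := sum_filter_add_sum_filter_not univ (· ≤ k) δ
    rw [filter_ge_eq_Iic, hsum] at hsplit
    have htail : ∑ i ∈ univ.filter (fun i => ¬ i ≤ k), δ i ≤ 0 :=
      sum_nonpos fun i hi => hge i ((not_lt.mp hk).trans (not_le.mp (mem_filter.mp hi).2).le)
    rw [eq_neg_of_add_eq_zero_left hsplit]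
    exact neg_nonneg.mpr htail

theorem statement4_general (a₁ b₁ a₂ b₂ : ℝ) (d₁ d₂ c : ℕ)
    (h₁ : a₁ = a₂ + d₁) (h₂ : a₂ = b₁ + c) (h₃ : b₁ = b₂ + d₂)
    (lam lam' : Fin (d₁ + c + 1 + (c + d₂ + 1)) → ℝ)
    (hlam : ∀ i : Fin (d₁ + c + 1 + (c + d₂ + 1)),
      lam i = if (i : ℕ) < d₁ + c + 1 then (a₁ + b₁) / 2 else (a₂ + b₂) / 2)
    (hlam' : ∀ i : Fin (d₁ + c + 1 + (c + d₂ + 1)),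
      lam' i =
        if (a₂ + b₁) / 2 ≤ (a₁ + b₂) / 2 then
          (if (i : ℕ) < d₁ + c + d₂ + 1 then (a₁ + b₂) / 2 else (a₂ + b₁) / 2)
        else
          (if (i : ℕ) < c + 1 then (a₂ + b₁) / 2 else (a₁ + b₂) / 2)) :
    (∑ i, lam i = ∑ i, lam' i) ∧
    ∀ k : Fin (d₁ + c + 1 + (c + d₂ + 1)),
      0 ≤ ∑ i ∈ Finset.Iic k, (lam i - lam' i) := by
  have hd₁ : (0 : ℝ) ≤ d₁ := d₁.cast_nonneg
  have hd₂ : (0 : ℝ) ≤ d₂ := d₂.cast_nonneg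
  have hsum : ∑ i, lam i = ∑ i, lam' i := by
    simp only [hlam, hlam']
    rw [sum_fin_ite_val_lt rfl]
    subst h₁ h₂ h₃
    split_ifs
    · rw [sum_fin_ite_val_lt (m := c + 1) (by omega)]
      simp only [nsmul_eq_mul]; push_cast; ring
    · rw [sum_fin_ite_val_lt (m := d₁ + c + d₂ + 1) (by omega)]
      simp only [nsmul_eq_mul]; push_cast; ring
  refine ⟨hsum, sum_Iic_nonneg_of_nonneg_of_nonpos ⟨d₁ + c + 1, by omega⟩ ?_ ?_
    (by rw [sum_sub_distrib, hsum, sub_self])⟩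
  · intro i hi
    rw [hlam, hlam', if_pos (Fin.lt_def.mp hi)]
    split_ifs <;> linarith
  · intro i hi
    rw [hlam, hlam', if_neg (not_lt.mpr (Fin.le_def.mp hi))]
    split_ifs <;> linarith

/-- Taking union and intersection of two linked segments yields a smaller
Langlands parameter.  The reals satisfy `a₁ = a₂ + d₁`, `a₂ = b₁ + c`, `b₁ = b₂ + d₂` with
`d₁, d₂, c ≥ 1` naturals; this encodes `a₁ > a₂ > b₁ > b₂` with `a₁ - b₁ ∈ ℕ`,
`a₂ - b₂ ∈ ℕ` and `a₁ - a₂ ∈ ℤ` (linked segments).  Then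
`N = (a₁ - b₁ + 1) + (a₂ - b₂ + 1) = (d₁ + c + 1) + (c + d₂ + 1)`.  The vector `lam` is
the concatenation of the constant blocks of value `(a₁+b₁)/2` (length `d₁+c+1`) and
`(a₂+b₂)/2` (length `c+d₂+1`); `lam'` is the concatenation of the blocks of value
`(a₁+b₂)/2` (length `a₁-b₂+1 = d₁+c+d₂+1`, the union) and `(a₂+b₁)/2` (length
`a₂-b₁+1 = c+1`, the intersection), the block of larger (or equal) value first.
Then `lam' ≤_P lam`. -/
theorem statement4 (a₁ b₁ a₂ b₂ : ℝ) (d₁ d₂ c : ℕ)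
    (hd₁ : 1 ≤ d₁) (hd₂ : 1 ≤ d₂) (hc : 1 ≤ c)
    (h₁ : a₁ = a₂ + d₁) (h₂ : a₂ = b₁ + c) (h₃ : b₁ = b₂ + d₂)
    (lam lam' : Fin (d₁ + c + 1 + (c + d₂ + 1)) → ℝ)
    (hlam : ∀ i : Fin (d₁ + c + 1 + (c + d₂ + 1)),
      lam i = if (i : ℕ) < d₁ + c + 1 then (a₁ + b₁) / 2 else (a₂ + b₂) / 2)
    (hlam' : ∀ i : Fin (d₁ + c + 1 + (c + d₂ + 1)),
      lam' i =
        if (a₂ + b₁) / 2 ≤ (a₁ + b₂) / 2 then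
          (if (i : ℕ) < d₁ + c + d₂ + 1 then (a₁ + b₂) / 2 else (a₂ + b₁) / 2)
        else
          (if (i : ℕ) < c + 1 then (a₂ + b₁) / 2 else (a₁ + b₂) / 2)) :
    (∑ i, lam i = ∑ i, lam' i) ∧
    ∀ k : Fin (d₁ + c + 1 + (c + d₂ + 1)),
      0 ≤ ∑ i ∈ Finset.Iic k, (lam i - lam' i) :=
  statement4_general a₁ b₁ a₂ b₂ d₁ d₂ c h₁ h₂ h₃ lam lam' hlam hlam'
end

section
/- Let n be the multiplicity function of a residual segment of type B. Let S_1, …, S_t (t ≥ 1) be integer intervals S_i = {b_i, b_i + 1, …, c_i} with 0 ≤ b_i ≤ c_i that are pairwise unlinked, i.e. for all i ≠ j either S_i ⊆ S_j, or S_j ⊆ S_i, or S_i ∪ S_j is not an interval of integers. Suppose that the function n′ : ℕ → ℕ defined by n′(j) = n(j) + #{i : b_i ≤ j ≤ c_i} is again the multiplicity function of a residual segment of type B. Then there exists an index i such that the function j ↦ n(j) + (1 if b_i ≤ j ≤ c_i, and 0 otherwise) is the multiplicity function of a residual segment of type B; that is, at least one of the linear segments merges alone with n to form a residual segment. -/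
/-!
Being residual is a local condition: from `1` on, `n` decreases in steps of at most one and
vanishes eventually, and `n 0 = n 1 / 2` (the Jumps are the descents of `n`, together with `0`
when `n 1` is even). Unlinked intervals are never adjacent, so adding all of them makes the sum
drop by at least one more just after each right end `c i` and rise just at each left end `b i`.
Since the sum is again residual, `n` is flat at each `c i ≥ 1` and descends just below each
`b i ≥ 2`; such an interval merges alone with `n`, as does one starting at `1` or `0` when the
parity of `n 1` fits. Comparing `n 0 = n 1 / 2` with the same condition for the sum shows that
one of these intervals exists.
-/

/-- A residual segment of type B, presented by its multiplicity function `n : ℕ → ℕ`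
together with explicit Jumps `a : Fin r → ℕ` (`r` odd, `a` strictly decreasing):
`n j = #{i : a i ≥ j}` for `j ≥ 1` and `n 0 = (r-1)/2`. -/
def ResidualBData (n : ℕ → ℕ) (r : ℕ) (a : Fin r → ℕ) : Prop :=
  Odd r ∧ StrictAnti a ∧
    (∀ j : ℕ, 1 ≤ j → n j = (Finset.univ.filter fun i : Fin r => j ≤ a i).card) ∧
    n 0 = (r - 1) / 2

/-- `n` is the multiplicity function of a residual segment of type B. -/
def IsResidualSegmentB (n : ℕ → ℕ) : Prop :=
  ∃ (r : ℕ) (a : Fin r → ℕ), ResidualBData n r a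

open Finset

lemma card_filter_le_eq_card_filter_succ_le_add (s : Finset ℕ) (j : ℕ) :
    #{x ∈ s | j ≤ x} = #{x ∈ s | j + 1 ≤ x} + if j ∈ s then 1 else 0 := by
  rw [card_filter, card_filter, ← sum_ite_eq' s j (fun _ => 1), ← sum_add_distrib]
  refine sum_congr rfl fun x _ => ?_
  split_ifs <;> omega

lemma card_filter_comp_eq_card_filter_image {r : ℕ} {a : Fin r → ℕ}
    (ha : Function.Injective a) (p : ℕ → Prop) [DecidablePred p] :
    #{i | p (a i)} = #{x ∈ univ.image a | p x} := by
  rw [filter_image, card_image_of_injective _ ha]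

lemma exists_strictAnti_image_univ_eq (J : Finset ℕ) :
    ∃ a : Fin #J → ℕ, StrictAnti a ∧ univ.image a = J := by
  refine ⟨J.orderEmbOfFin rfl ∘ Fin.rev,
    (J.orderEmbOfFin rfl).strictMono.comp_strictAnti Fin.rev_strictAnti, ?_⟩
  rw [← image_image, image_univ_of_surjective Fin.rev_surjective, image_orderEmbOfFin_univ]

lemma isResidualSegmentB_iff_exists_finset {n : ℕ → ℕ} :
    IsResidualSegmentB n ↔ ∃ J : Finset ℕ, Odd #J ∧
      (∀ j, 1 ≤ j → n j = #{x ∈ J | j ≤ x}) ∧ n 0 = (#J - 1) / 2 := by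
  constructor
  · rintro ⟨r, a, hodd, ha, hval, h0⟩
    have hcard : #(univ.image a) = r := by
      rw [card_image_of_injective _ ha.injective, card_fin]
    refine ⟨univ.image a, by rwa [hcard], fun j hj => ?_, by rwa [hcard]⟩
    rw [hval j hj, card_filter_comp_eq_card_filter_image ha.injective]
  · rintro ⟨J, hodd, hval, h0⟩
    obtain ⟨a, ha, hJ⟩ := exists_strictAnti_image_univ_eq J
    refine ⟨#J, a, hodd, ha, fun j hj => ?_, h0⟩
    rw [hval j hj, card_filter_comp_eq_card_filter_image ha.injective, hJ]

theorem isResidualSegmentB_iff {n : ℕ → ℕ} :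
    IsResidualSegmentB n ↔
      (∀ j, 1 ≤ j → n (j + 1) ≤ n j ∧ n j ≤ n (j + 1) + 1) ∧
      (∃ N, ∀ j, N ≤ j → n j = 0) ∧ n 0 = n 1 / 2 := by
  rw [isResidualSegmentB_iff_exists_finset]
  constructor
  · rintro ⟨J, hodd, hval, h0⟩
    refine ⟨fun j hj => ?_, ⟨J.sup id + 1, fun j hj => ?_⟩, ?_⟩
    · have := card_filter_le_eq_card_filter_succ_le_add J j
      rw [hval j hj, hval (j + 1) (by omega)]
      split_ifs at this <;> omega
    · rw [hval j (by omega), card_eq_zero, filter_eq_empty_iff]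
      have := fun x (hx : x ∈ J) => le_sup (f := id) hx
      grind
    · have hJ := card_filter_le_eq_card_filter_succ_le_add J 0
      rw [filter_true_of_mem fun x _ => Nat.zero_le x, ← hval 1 le_rfl] at hJ
      obtain ⟨k, hk⟩ := hodd
      rw [h0]
      split_ifs at hJ <;> omega
  · rintro ⟨hstep, ⟨N, hN⟩, h0⟩
    let J : Finset ℕ := {x ∈ range (N + 1) | (1 ≤ x ∧ n (x + 1) < n x) ∨ (x = 0 ∧ Even (n 1))}
    have hmem : ∀ x, 1 ≤ x → (x ∈ J ↔ n (x + 1) < n x) := fun x hx => by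
      have := hN x
      simp only [J, mem_filter, mem_range]
      omega
    have hfar : ∀ j, 1 ≤ j → N ≤ j → n j = #{x ∈ J | j ≤ x} := by
      intro j hj hNj
      rw [hN j hNj, eq_comm, card_eq_zero, filter_eq_empty_iff]
      intro x hx hjx
      rw [hmem x (by omega), hN x (by omega)] at hx
      omega
    have hval : ∀ j, 1 ≤ j → n j = #{x ∈ J | j ≤ x} := by
      intro j hj
      rcases le_total N j with h | h
      · exact hfar j hj h
      refine Nat.decreasingInduction (motive := fun m _ => 1 ≤ m → n m = #{x ∈ J | m ≤ x})
        (fun k _ ih hk => ?_) (fun hN1 => hfar N hN1 le_rfl) h hj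
      rw [card_filter_le_eq_card_filter_succ_le_add, ← ih (by omega)]
      have := hstep k hk
      simp only [hmem k hk]
      split_ifs <;> omega
    have hJ := card_filter_le_eq_card_filter_succ_le_add J 0
    rw [filter_true_of_mem fun x _ => Nat.zero_le x, ← hval 1 le_rfl] at hJ
    have h0J : 0 ∈ J ↔ Even (n 1) := by simp [J]
    refine ⟨J, ?_, hval, ?_⟩ <;> simp only [h0J, Nat.even_iff] at hJ
    · rw [Nat.odd_iff]
      split_ifs at hJ <;> omega
    · split_ifs at hJ <;> omega

lemma isResidualSegmentB_add_indicator {n : ℕ → ℕ} (hn : IsResidualSegmentB n) {b c : ℕ}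
    (hbc : b ≤ c) (hc : 1 ≤ c) (hend : n c = n (c + 1)) (hstart : 2 ≤ b → n (b - 1) = n b + 1)
    (hb1 : b = 1 → Even (n 1)) (hb0 : b = 0 → Odd (n 1)) :
    IsResidualSegmentB (fun j => n j + if b ≤ j ∧ j ≤ c then 1 else 0) := by
  rw [isResidualSegmentB_iff] at hn ⊢
  obtain ⟨hstep, ⟨N, hN⟩, h0⟩ := hn
  rw [Nat.even_iff] at hb1
  rw [Nat.odd_iff] at hb0
  refine ⟨fun j hj => ?_, ⟨N + c + 1, fun j hj => ?_⟩, ?_⟩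
  · have := hstep j hj
    have : j + 1 = b → n j = n (j + 1) + 1 := fun h => by
      simpa [← h] using hstart (by omega)
    rcases eq_or_ne j c with rfl | _ <;> split_ifs <;> omega
  · rw [hN j (by omega)]
    split_ifs <;> omega
  · split_ifs <;> omega

section Intervals

lemma succ_ne_of_unlinked {b c b' c' : ℕ} (hbc : b ≤ c) (hbc' : b' ≤ c')
    (h : Icc b c ⊆ Icc b' c' ∨ Icc b' c' ⊆ Icc b c ∨ ¬ ∃ l u, Icc b c ∪ Icc b' c' = Icc l u) :
    c + 1 ≠ b' := by
  rintro rfl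
  rcases h with h | h | h
  · have := h (left_mem_Icc.2 hbc)
    simp only [mem_Icc] at this
    omega
  · have := h (left_mem_Icc.2 hbc')
    simp only [mem_Icc] at this
    omega
  · refine h ⟨b, c', ?_⟩
    ext x
    simp only [mem_union, mem_Icc]
    omega

variable {ι : Type*} [Fintype ι]

def coverCount (b c : ι → ℕ) (j : ℕ) : ℕ := #{i | b i ≤ j ∧ j ≤ c i}

variable {b c : ι → ℕ}

lemma coverCount_succ_lt (hadj : ∀ i i', c i + 1 ≠ b i') {i : ι} (hi : b i ≤ c i) :
    coverCount b c (c i + 1) < coverCount b c (c i) := by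
  refine card_lt_card ((ssubset_iff_of_subset fun k hk => ?_).2 ⟨i, by simp [hi], by simp⟩)
  simp only [mem_filter, mem_univ, true_and] at hk ⊢
  have := hadj i k
  omega

lemma coverCount_pred_lt (hadj : ∀ i i', c i + 1 ≠ b i') {i : ι} (hb : 1 ≤ b i)
    (hi : b i ≤ c i) : coverCount b c (b i - 1) < coverCount b c (b i) := by
  refine card_lt_card ((ssubset_iff_of_subset fun k hk => ?_).2 ⟨i, by simp [hi], by simp; omega⟩)
  simp only [mem_filter, mem_univ, true_and] at hk ⊢
  have := hadj k i
  omega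

lemma coverCount_eq_card (j : ℕ) (h : ∀ i, b i ≤ j ∧ j ≤ c i) :
    coverCount b c j = Fintype.card ι := by
  rw [coverCount, filter_true_of_mem fun i _ => h i, card_univ]

lemma coverCount_eq_zero (j : ℕ) (h : ∀ i, ¬ (b i ≤ j ∧ j ≤ c i)) : coverCount b c j = 0 := by
  rw [coverCount, filter_false_of_mem fun i _ => h i, card_empty]

lemma coverCount_le_card (j : ℕ) : coverCount b c j ≤ Fintype.card ι :=
  card_filter_le _ _

lemma exists_merge_parity_of_coverCount [Nonempty ι] (hbc : ∀ i, b i ≤ c i)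
    (hadj : ∀ i i', c i + 1 ≠ b i') {k : ℕ}
    (h : k / 2 + coverCount b c 0 = (k + coverCount b c 1) / 2) :
    ∃ i, 1 ≤ c i ∧ (b i = 1 → Even k) ∧ (b i = 0 → Odd k) := by
  have hcard : 0 < Fintype.card ι := Fintype.card_pos
  by_cases hbig : ∃ i, 2 ≤ b i
  · obtain ⟨i, hi⟩ := hbig
    exact ⟨i, (hi.trans (hbc i)).trans' one_le_two, by omega, by omega⟩
  push Not at hbig
  rcases Nat.even_or_odd k with hk | hk
  · by_cases hone : ∃ i, b i = 1
    · obtain ⟨i, hi⟩ := hone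
      exact ⟨i, hi ▸ hbc i, fun _ => hk, by omega⟩
    push Not at hone
    have h0 := coverCount_eq_card (b := b) (c := c) 0 fun i => by
      have := hbig i; have := hone i; omega
    have h1 := coverCount_le_card (b := b) (c := c) 1
    obtain ⟨m, rfl⟩ := hk
    omega
  · by_cases hzero : ∃ i, b i = 0 ∧ 1 ≤ c i
    · obtain ⟨i, hb, hc⟩ := hzero
      exact ⟨i, hc, by omega, fun _ => hk⟩
    push Not at hzero
    obtain ⟨m, rfl⟩ := hk
    by_cases hpoint : ∃ i, c i = 0
    · -- an interval `{0}` is adjacent to every interval starting at `1`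
      obtain ⟨i₀, hi₀⟩ := hpoint
      have h0 := coverCount_eq_card (b := b) (c := c) 0 fun i => by
        have := hbig i; have := hadj i₀ i; omega
      have h1 := coverCount_eq_zero (b := b) (c := c) 1 fun i => by
        have := hbig i; have := hadj i₀ i; have := hzero i; omega
      omega
    · push Not at hpoint
      have h0 := coverCount_eq_zero (b := b) (c := c) 0 fun i => by
        have := hbig i; have := hzero i; have := hpoint i; omega
      have h1 := coverCount_eq_card (b := b) (c := c) 1 fun i => by
        have := hbig i; have := hzero i; have := hpoint i; have := hbc i; omega
      omega

end Intervals

/-- (Merging lemma.)  Let `n` be a residual segment of type B and let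
`S_i = {b i, …, c i}` (`i : Fin t`, `t ≥ 1`) be pairwise unlinked intervals of naturals.
If adding all the intervals to `n` yields again a residual segment of type B, then some
single interval merges alone with `n` to a residual segment of type B. -/
theorem statement6 (n : ℕ → ℕ) (hn : IsResidualSegmentB n)
    (t : ℕ) (ht : 1 ≤ t) (b c : Fin t → ℕ) (hbc : ∀ i, b i ≤ c i)
    (hunlinked : ∀ i j : Fin t, i ≠ j →
      Finset.Icc (b i) (c i) ⊆ Finset.Icc (b j) (c j) ∨
      Finset.Icc (b j) (c j) ⊆ Finset.Icc (b i) (c i) ∨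
      ¬ ∃ l u : ℕ, Finset.Icc (b i) (c i) ∪ Finset.Icc (b j) (c j) = Finset.Icc l u)
    (h' : IsResidualSegmentB
      (fun j => n j + (Finset.univ.filter fun i : Fin t => b i ≤ j ∧ j ≤ c i).card)) :
    ∃ i : Fin t, IsResidualSegmentB
      (fun j => n j + if b i ≤ j ∧ j ≤ c i then 1 else 0) := by
  have : Nonempty (Fin t) := ⟨⟨0, ht⟩⟩
  have hadj : ∀ i i', c i + 1 ≠ b i' := fun i i' => by
    rcases eq_or_ne i i' with rfl | hne
    · have := hbc i
      omega
    · exact succ_ne_of_unlinked (hbc i) (hbc i') (hunlinked i i' hne)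
  have hm : IsResidualSegmentB (fun j => n j + coverCount b c j) := h'
  obtain ⟨hstep, -, h0⟩ := isResidualSegmentB_iff.1 hn
  obtain ⟨hstep', -, h0'⟩ := isResidualSegmentB_iff.1 hm
  obtain ⟨i, hci, hb1, hb0⟩ := exists_merge_parity_of_coverCount hbc hadj (k := n 1) (by omega)
  refine ⟨i, isResidualSegmentB_add_indicator hn (hbc i) hci ?_ (fun hbi => ?_) hb1 hb0⟩
  · have := hstep (c i) hci
    have := hstep' (c i) hci
    have := coverCount_succ_lt hadj (hbc i)
    omega
  · have := hstep (b i - 1) (by omega)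
    have := hstep' (b i - 1) (by omega)
    have := coverCount_pred_lt hadj (by omega) (hbc i)
    rw [Nat.sub_add_cancel (by omega)] at *
    omega
end

section
/- Let N be a residual segment of type B of length d ≥ 1 with Jumps a_1 > … > a_r where r ≥ 3; fix 1 ≤ i < r and set 𝔞 = a_i and a_− = a_{i+1}, two consecutive Jumps. Call an integer 𝔟 admissible if 𝔞 > 𝔟, 𝔞 + 𝔟 > 0, and there is a (necessarily unique) residual segment m_𝔟 of type B with N(j) = m_𝔟(j) + #{k ∈ ℤ : 𝔟 ≤ k ≤ 𝔞 and |k| = j} for every j ∈ ℕ. For an admissible 𝔟, let λ_𝔟 ∈ ℝ^d be the vector whose first 𝔞 − 𝔟 + 1 coordinates are 𝔞, 𝔞−1, …, 𝔟 and whose remaining coordinates list, in weakly decreasing order, the multiset in which each j ∈ ℕ occurs m_𝔟(j) times. For λ ∈ ℝ^d set C(λ) = #{(p,q) : 1 ≤ p < q ≤ d, λ_p < λ_q} + #{(p,q) : 1 ≤ p < q ≤ d, λ_p + λ_q < 0} + #{p : λ_p < 0}, the number of positive roots β of the root system of type B_d with ⟨λ, β^∨⟩ < 0. Then 𝔟 =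 −a_− is admissible, and C(λ_𝔟) ≤ C(λ_{−a_−}) for every admissible 𝔟; i.e. the count C is maximal at the point of the form (𝔞, …, −a_−)(m). -/
/-- `#{k ∈ ℤ : 𝔟 ≤ k ≤ 𝔞 ∧ |k| = j}`: the multiplicity with which `j` occurs among the
absolute values of the entries of the linear segment `(𝔞, 𝔞-1, …, 𝔟)`. -/
noncomputable def segCount (𝔞 : ℕ) (𝔟 : ℤ) (j : ℕ) : ℕ :=
  ((Finset.Icc 𝔟 (𝔞 : ℤ)).filter fun k => k.natAbs = j).card

/-- `𝔟` is admissible for `N` and `𝔞`: `𝔞 > 𝔟`, `𝔞 + 𝔟 > 0`, and withdrawing the linear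
segment `(𝔞, …, 𝔟)` from `N` leaves a residual segment of type B. -/
def AdmissibleB (N : ℕ → ℕ) (𝔞 : ℕ) (𝔟 : ℤ) : Prop :=
  𝔟 < (𝔞 : ℤ) ∧ 0 < (𝔞 : ℤ) + 𝔟 ∧
    ∃ m : ℕ → ℕ, IsResidualSegmentB m ∧ ∀ j : ℕ, N j = m j + segCount 𝔞 𝔟 j

/-- `lam` is the vector `λ_𝔟` of length `d`: its first `𝔞 - 𝔟 + 1` coordinates are
`𝔞, 𝔞-1, …, 𝔟`, and its remaining coordinates list, weakly decreasingly, the multiset in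
which each `j : ℕ` occurs `m j` times. -/
def IsLambdaVec (𝔞 : ℕ) (𝔟 : ℤ) (m : ℕ → ℕ) (d : ℕ) (lam : Fin d → ℝ) : Prop :=
  (∀ p : Fin d, (p : ℕ) < ((𝔞 : ℤ) - 𝔟).toNat + 1 → lam p = (𝔞 : ℝ) - (p : ℕ)) ∧
  (∀ p q : Fin d, ((𝔞 : ℤ) - 𝔟).toNat + 1 ≤ (p : ℕ) → p ≤ q → lam q ≤ lam p) ∧
  (∀ j : ℕ, (Finset.univ.filter fun p : Fin d =>
      ((𝔞 : ℤ) - 𝔟).toNat + 1 ≤ (p : ℕ) ∧ lam p = (j : ℝ)).card = m j)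

/-- `C(λ)`: the number of positive roots `β` of the root system of type `B_d` with
`⟨λ, β^∨⟩ < 0`. -/
noncomputable def Cfun {d : ℕ} (lam : Fin d → ℝ) : ℕ :=
  (Finset.univ.filter fun pq : Fin d × Fin d => pq.1 < pq.2 ∧ lam pq.1 < lam pq.2).card +
  (Finset.univ.filter fun pq : Fin d × Fin d => pq.1 < pq.2 ∧ lam pq.1 + lam pq.2 < 0).card +
  (Finset.univ.filter fun p : Fin d => lam p < 0).card

/-!
Write `λ_c` for the vector with head `(𝔞, …, c)` and tail the multiset `m_c` left over from `N`.
Every positive root counted by `C(λ_c)` involves a head coordinate, so `C(λ_c)` is a sum over the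
head values `v ∈ [c, 𝔞]`, and it makes sense for every `c`, admissible or not. Lowering `c` by one
moves a copy of `|c - 1|` from the tail to the end of the head; for each old head value the lost
root `e_p - e_q` is matched by a new root `e_p + e_q`, and the new coordinate only adds roots.
Hence `C(λ_c)` grows as `c` decreases, and admissibility forces `c ≥ -a_-`.
-/

open Finset

section SegCount

lemma segCount_of_one_le (𝔞 : ℕ) (𝔟 : ℤ) {j : ℕ} (hj : 1 ≤ j) :
    segCount 𝔞 𝔟 j = (if 𝔟 ≤ j ∧ j ≤ 𝔞 then 1 else 0) + (if 𝔟 ≤ -(j : ℤ) then 1 else 0) := by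
  have hpair : {k ∈ Icc 𝔟 (𝔞 : ℤ) | k.natAbs = j} =
      {k ∈ ({(j : ℤ), -(j : ℤ)} : Finset ℤ) | 𝔟 ≤ k ∧ k ≤ 𝔞} := by
    ext k
    simp only [mem_filter, mem_Icc, mem_insert, mem_singleton]
    omega
  rw [segCount, hpair, card_filter, sum_pair (by omega)]
  split_ifs <;> omega

lemma segCount_zero_of_nonpos (𝔞 : ℕ) {𝔟 : ℤ} (h𝔟 : 𝔟 ≤ 0) : segCount 𝔞 𝔟 0 = 1 := by
  rw [segCount, Finset.card_eq_one]
  exact ⟨0, by ext k; simp only [mem_filter, mem_Icc, mem_singleton]; omega⟩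

lemma segCount_of_le (𝔞 : ℕ) {w : ℤ} (hw : w ≤ 𝔞) (j : ℕ) :
    segCount 𝔞 w j = segCount 𝔞 (w + 1) j + if j = w.natAbs then 1 else 0 := by
  have hIcc : Icc w (𝔞 : ℤ) = insert w (Icc (w + 1) 𝔞) := by
    ext k; simp only [mem_Icc, mem_insert]; omega
  rw [segCount, segCount, hIcc, filter_insert]
  by_cases hj : j = w.natAbs
  · rw [if_pos hj.symm, if_pos hj, card_insert_of_notMem (by simp)]
  · rw [if_neg (Ne.symm hj), if_neg hj, add_zero]

lemma sum_segCount {𝔞 B : ℕ} {c : ℤ} (hB : ∀ k ∈ Icc c (𝔞 : ℤ), k.natAbs < B) :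
    ∑ j ∈ range B, segCount 𝔞 c j = #(Icc c (𝔞 : ℤ)) :=
  (card_eq_sum_card_fiberwise fun k hk => mem_range.mpr (hB k hk)).symm

end SegCount

section ResidualSegment

lemma ResidualBData.succ_eq {n : ℕ → ℕ} {r : ℕ} {a : Fin r → ℕ} (hn : ResidualBData n r a)
    {t : ℕ} (ht : 1 ≤ t) (hjump : ∀ k, a k ≠ t) : n (t + 1) = n t := by
  rw [hn.2.2.1 t ht, hn.2.2.1 (t + 1) (by omega)]
  congr 1
  ext k
  simp only [mem_filter, mem_univ, true_and]
  have := hjump k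
  omega

lemma IsResidualSegmentB.succ_le {n : ℕ → ℕ} (hn : IsResidualSegmentB n) {j : ℕ} (hj : 1 ≤ j) :
    n (j + 1) ≤ n j := by
  obtain ⟨r, a, -, -, hcount, -⟩ := hn
  rw [hcount j hj, hcount (j + 1) (by omega)]
  exact card_le_card (monotone_filter_right _ fun k _ (hk : j + 1 ≤ a k) => by omega)

lemma isResidualSegmentB_of_subset {r : ℕ} {a : Fin r → ℕ} (ha : StrictAnti a)
    (s : Finset (Fin r)) (hs : Odd #s) {m : ℕ → ℕ}
    (hm : ∀ j, 1 ≤ j → m j = #{k ∈ s | j ≤ a k}) (hm0 : m 0 = (#s - 1) / 2) :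
    IsResidualSegmentB m := by
  refine ⟨#s, a ∘ s.orderEmbOfFin rfl, hs, ha.comp_strictMono (s.orderEmbOfFin rfl).strictMono,
    fun j hj => ?_, hm0⟩
  rw [hm j hj]
  conv_lhs => rw [← map_orderEmbOfFin_univ s rfl, filter_map, card_map]
  rfl

end ResidualSegment

section RootCount

/-- `C(λ)` for `λ = (𝔞, 𝔞 - 1, …, c)` followed by the multiset `m` (restricted to `range B`),
split over the head coordinates `λ_p = v`: the roots `e_p - e_q`, `e_p + e_q` with `λ_q` in the
tail, the roots `e_p + e_q` with `λ_q = u < v` in the head, and `e_p`. -/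
noncomputable def rootCountTerm (B 𝔞 : ℕ) (c : ℤ) (m : ℕ → ℕ) (v : ℤ) : ℕ :=
  ∑ j ∈ range B, m j * ((if v < j then 1 else 0) + if (j : ℤ) < -v then 1 else 0) +
    #{u ∈ Icc c (𝔞 : ℤ) | u < v ∧ u + v < 0} + if v < 0 then 1 else 0

noncomputable def rootCount (B 𝔞 : ℕ) (c : ℤ) (m : ℕ → ℕ) : ℕ :=
  ∑ v ∈ Icc c (𝔞 : ℤ), rootCountTerm B 𝔞 c m v

variable {B 𝔞 : ℕ}

/-- Moving `|w|` from the tail to the end of the head does not change the contribution of a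
head coordinate `v > w`: the lost tail root `e_p - e_q` (present iff `v < |w|`) is replaced by
the head root `e_p + e_q` (present iff `v + w < 0`). -/
lemma rootCountTerm_succ (m : ℕ → ℕ) {w v : ℤ} (hwv : w < v) (hw : w.natAbs < B) :
    rootCountTerm B 𝔞 (w + 1) (fun j => m j + if j = w.natAbs then 1 else 0) v =
      rootCountTerm B 𝔞 w m v := by
  have htail : ∑ j ∈ range B, (m j + if j = w.natAbs then 1 else 0) *
        ((if v < j then 1 else 0) + if (j : ℤ) < -v then 1 else 0) =
      ∑ j ∈ range B, m j * ((if v < j then 1 else 0) + if (j : ℤ) < -v then 1 else 0) +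
        if w + v < 0 then 1 else 0 := by
    simp only [add_mul, sum_add_distrib, ite_mul, one_mul, zero_mul, sum_ite_eq',
      mem_range, hw, if_true]
    congr 1
    split_ifs <;> omega
  have hhead : #{u ∈ Icc w (𝔞 : ℤ) | u < v ∧ u + v < 0} =
      #{u ∈ Icc (w + 1) (𝔞 : ℤ) | u < v ∧ u + v < 0} + if w + v < 0 then 1 else 0 := by
    by_cases hw𝔞 : w ≤ 𝔞
    · have hIcc : Icc w (𝔞 : ℤ) = insert w (Icc (w + 1) 𝔞) := by
        ext k; simp only [mem_Icc, mem_insert]; omega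
      rw [hIcc, filter_insert]
      split_ifs <;> first | omega | rw [card_insert_of_notMem (by simp)]
    · rw [Icc_eq_empty (by omega), Icc_eq_empty (by omega), if_neg (by omega)]
      rfl
  rw [rootCountTerm, rootCountTerm, htail, hhead]
  ring

lemma rootCount_succ_le (m : ℕ → ℕ) {w : ℤ} (hw𝔞 : w ≤ 𝔞) (hw : w.natAbs < B) :
    rootCount B 𝔞 (w + 1) (fun j => m j + if j = w.natAbs then 1 else 0) ≤
      rootCount B 𝔞 w m := by
  have hIcc : Icc w (𝔞 : ℤ) = insert w (Icc (w + 1) 𝔞) := by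
    ext k; simp only [mem_Icc, mem_insert]; omega
  rw [rootCount, rootCount, hIcc, sum_insert (by simp)]
  refine le_add_left (sum_le_sum fun v hv => (rootCountTerm_succ m ?_ hw).le)
  simp only [mem_Icc] at hv
  omega

/-- `hm` says that `(𝔞, …, c)` together with `m` and `(𝔞, …, c')` together with `m'` have the same
multiset of absolute values. -/
lemma rootCount_mono {c c' : ℤ} {m m' : ℕ → ℕ} (hcc' : c' ≤ c) (hc𝔞 : c ≤ 𝔞)
    (hB : ∀ k ∈ Ico c' c, k.natAbs < B)
    (hm : ∀ j, m j + segCount 𝔞 c j = m' j + segCount 𝔞 c' j) :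
    rootCount B 𝔞 c m ≤ rootCount B 𝔞 c' m' := by
  obtain ⟨n, hn⟩ : ∃ n : ℕ, c = c' + n := ⟨(c - c').toNat, by omega⟩
  induction n generalizing c' m' with
  | zero =>
    obtain rfl : c = c' := by simpa using hn
    obtain rfl : m = m' := funext fun j => by simpa using hm j
    rfl
  | succ n ih =>
    have hc' : c'.natAbs < B := hB c' (by simp only [mem_Ico]; omega)
    refine le_trans (ih (m' := fun j => m' j + if j = c'.natAbs then 1 else 0) (by omega)
      (fun k hk => hB k (by simp only [mem_Ico] at hk ⊢; omega)) (fun j => ?_) (by omega))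
      (rootCount_succ_le m' (by omega) hc')
    rw [hm j, segCount_of_le 𝔞 (by omega) j]
    ring

end RootCount

section LambdaVec

variable {d h B : ℕ} {lam : Fin d → ℝ} {m : ℕ → ℕ}

lemma pairwiseDisjoint_levelSets (s : Finset ℕ) :
    (s : Set ℕ).PairwiseDisjoint fun j : ℕ => ({p : Fin d | h ≤ p.val ∧ lam p = j} : Finset _) := by
  intro j₁ _ j₂ _ hne
  refine disjoint_left.mpr fun p hp₁ hp₂ => hne ?_
  simp only [mem_filter] at hp₁ hp₂
  exact_mod_cast hp₁.2.2.symm.trans hp₂.2.2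

lemma biUnion_levelSets_eq_tail (hcount : ∀ j : ℕ, #{p : Fin d | h ≤ p.val ∧ lam p = j} = m j)
    (hlen : h + ∑ j ∈ range B, m j = d) :
    (range B).biUnion (fun j : ℕ => {p : Fin d | h ≤ p.val ∧ lam p = j}) =
      ({p : Fin d | h ≤ p.val} : Finset (Fin d)) := by
  have htail : #({p : Fin d | h ≤ p.val} : Finset (Fin d)) = d - h := by
    have := card_filter_add_card_filter_not (s := (univ : Finset (Fin d))) (fun p => p.val < h)
    simp only [Fin.card_filter_val_lt, not_lt, card_univ, Fintype.card_fin] at this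
    omega
  refine eq_of_subset_of_card_le (fun p hp => ?_) ?_
  · obtain ⟨j, -, hp⟩ := mem_biUnion.mp hp
    exact mem_filter.mpr ⟨mem_univ p, (mem_filter.mp hp).2.1⟩
  · rw [card_biUnion (pairwiseDisjoint_levelSets _), htail, sum_congr rfl fun j _ => hcount j]
    exact Nat.sub_le_iff_le_add'.mpr hlen.ge

lemma sum_tail_eq (hcount : ∀ j : ℕ, #{p : Fin d | h ≤ p.val ∧ lam p = j} = m j)
    (hlen : h + ∑ j ∈ range B, m j = d) {M : Type*} [AddCommMonoid M] (g : ℝ → M) :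
    ∑ p : Fin d with h ≤ p.val, g (lam p) = ∑ j ∈ range B, m j • g j := by
  rw [← biUnion_levelSets_eq_tail hcount hlen, sum_biUnion (pairwiseDisjoint_levelSets _)]
  refine sum_congr rfl fun j _ => ?_
  rw [sum_congr rfl fun p hp => by rw [(mem_filter.mp hp).2.2], sum_const, hcount]

end LambdaVec

lemma sum_filter_lt_add_sum_filter_le {d : ℕ} (h : ℕ) {M : Type*} [AddCommMonoid M]
    (f : Fin d → M) :
    ∑ q : Fin d with q.val < h, f q + ∑ q : Fin d with h ≤ q.val, f q = ∑ q, f q := by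
  simpa only [not_lt] using sum_filter_add_sum_filter_not univ (fun q : Fin d => q.val < h) f

lemma sum_head_reindex {d 𝔞 : ℕ} {𝔟 : ℤ} (h𝔟 : 𝔟 ≤ 𝔞) (hd : ((𝔞 : ℤ) - 𝔟).toNat + 1 ≤ d)
    {M : Type*} [AddCommMonoid M] (g : ℤ → M) :
    ∑ p : Fin d with p.val < ((𝔞 : ℤ) - 𝔟).toNat + 1, g (𝔞 - p.val) = ∑ v ∈ Icc 𝔟 (𝔞 : ℤ), g v := by
  refine sum_bij' (fun p _ => (𝔞 : ℤ) - p.val)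
    (fun v hv => ⟨((𝔞 : ℤ) - v).toNat, by have := mem_Icc.mp hv; omega⟩) ?_ ?_ ?_ ?_ ?_
  · intro p hp
    simp only [mem_filter, mem_univ, true_and, mem_Icc] at hp ⊢
    omega
  · intro v hv
    simp only [mem_filter, mem_univ, true_and, mem_Icc] at hv ⊢
    omega
  · intro p _
    ext
    dsimp only
    omega
  · intro v hv
    dsimp only
    have := mem_Icc.mp hv
    omega
  · intro p _
    rfl

namespace IsLambdaVec

variable {𝔞 : ℕ} {𝔟 : ℤ} {m : ℕ → ℕ} {d B : ℕ} {lam : Fin d → ℝ}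

lemma apply_of_head (hlam : IsLambdaVec 𝔞 𝔟 m d lam) {p : Fin d}
    (hp : p.val < ((𝔞 : ℤ) - 𝔟).toNat + 1) : lam p = ((𝔞 - p.val : ℤ) : ℝ) := by
  rw [hlam.1 p hp]
  push_cast
  rfl

lemma nonneg_of_tail (hlam : IsLambdaVec 𝔞 𝔟 m d lam)
    (hlen : ((𝔞 : ℤ) - 𝔟).toNat + 1 + ∑ j ∈ range B, m j = d) {p : Fin d}
    (hp : ((𝔞 : ℤ) - 𝔟).toNat + 1 ≤ p.val) : 0 ≤ lam p := by
  have hmem : p ∈ ({p : Fin d | ((𝔞 : ℤ) - 𝔟).toNat + 1 ≤ p.val} : Finset (Fin d)) := by simpa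
  rw [← biUnion_levelSets_eq_tail hlam.2.2 hlen] at hmem
  obtain ⟨j, -, hj⟩ := mem_biUnion.mp hmem
  rw [(mem_filter.mp hj).2.2]
  positivity

lemma sum_lt_of_head (hlam : IsLambdaVec 𝔞 𝔟 m d lam)
    (hlen : ((𝔞 : ℤ) - 𝔟).toNat + 1 + ∑ j ∈ range B, m j = d)
    {p : Fin d} (hp : p.val < ((𝔞 : ℤ) - 𝔟).toNat + 1) :
    ∑ q, (if p < q ∧ lam p < lam q then 1 else 0) =
      ∑ j ∈ range B, m j * if (𝔞 - p.val : ℤ) < j then 1 else 0 := by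
  rw [← sum_filter_lt_add_sum_filter_le (((𝔞 : ℤ) - 𝔟).toNat + 1)]
  have hhead : ∑ q : Fin d with q.val < ((𝔞 : ℤ) - 𝔟).toNat + 1,
      (if p < q ∧ lam p < lam q then 1 else 0) = 0 := by
    refine sum_eq_zero fun q hq => if_neg fun ⟨hpq, hlt⟩ => ?_
    rw [hlam.apply_of_head hp, hlam.apply_of_head (mem_filter.mp hq).2, Int.cast_lt] at hlt
    rw [Fin.lt_def] at hpq
    omega
  have htail : ∑ q : Fin d with ((𝔞 : ℤ) - 𝔟).toNat + 1 ≤ q.val,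
      (if p < q ∧ lam p < lam q then 1 else 0) =
      ∑ q : Fin d with ((𝔞 : ℤ) - 𝔟).toNat + 1 ≤ q.val, (if lam p < lam q then 1 else 0) := by
    refine sum_congr rfl fun q hq => if_congr ⟨And.right, fun h => ⟨?_, h⟩⟩ rfl rfl
    rw [Fin.lt_def]
    have := (mem_filter.mp hq).2
    omega
  rw [hhead, htail, zero_add, sum_tail_eq hlam.2.2 hlen (fun x => if lam p < x then 1 else 0)]
  refine sum_congr rfl fun j _ => ?_
  rw [smul_eq_mul, hlam.apply_of_head hp]
  congr 2
  exact propext (by exact_mod_cast Iff.rfl)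

lemma sum_add_neg_of_head (hlam : IsLambdaVec 𝔞 𝔟 m d lam)
    (hlen : ((𝔞 : ℤ) - 𝔟).toNat + 1 + ∑ j ∈ range B, m j = d)
    (h𝔟 : 𝔟 ≤ 𝔞) {p : Fin d} (hp : p.val < ((𝔞 : ℤ) - 𝔟).toNat + 1) :
    ∑ q, (if p < q ∧ lam p + lam q < 0 then 1 else 0) =
      ∑ j ∈ range B, m j * (if (j : ℤ) < -(𝔞 - p.val : ℤ) then 1 else 0) +
        #{u ∈ Icc 𝔟 (𝔞 : ℤ) | u < (𝔞 - p.val : ℤ) ∧ u + (𝔞 - p.val : ℤ) < 0} := by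
  rw [← sum_filter_lt_add_sum_filter_le (((𝔞 : ℤ) - 𝔟).toNat + 1), add_comm]
  have hhead : ∑ q : Fin d with q.val < ((𝔞 : ℤ) - 𝔟).toNat + 1,
      (if p < q ∧ lam p + lam q < 0 then 1 else 0) =
      #{u ∈ Icc 𝔟 (𝔞 : ℤ) | u < (𝔞 - p.val : ℤ) ∧ u + (𝔞 - p.val : ℤ) < 0} := by
    have hd : ((𝔞 : ℤ) - 𝔟).toNat + 1 ≤ d := by omega
    rw [card_filter, ← sum_head_reindex h𝔟 hd]
    refine sum_congr rfl fun q hq => if_congr ?_ rfl rfl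
    rw [hlam.apply_of_head hp, hlam.apply_of_head (mem_filter.mp hq).2, Fin.lt_def,
      ← Int.cast_add, Int.cast_lt_zero]
    omega
  have htail : ∑ q : Fin d with ((𝔞 : ℤ) - 𝔟).toNat + 1 ≤ q.val,
      (if p < q ∧ lam p + lam q < 0 then 1 else 0) =
      ∑ q : Fin d with ((𝔞 : ℤ) - 𝔟).toNat + 1 ≤ q.val, (if lam p + lam q < 0 then 1 else 0) := by
    refine sum_congr rfl fun q hq => if_congr ⟨And.right, fun h => ⟨?_, h⟩⟩ rfl rfl
    rw [Fin.lt_def]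
    have := (mem_filter.mp hq).2
    omega
  rw [hhead, htail, sum_tail_eq hlam.2.2 hlen (fun x => if lam p + x < 0 then 1 else 0)]
  congr 1
  refine sum_congr rfl fun j _ => ?_
  rw [smul_eq_mul, hlam.apply_of_head hp]
  congr 2
  refine propext ?_
  rw [lt_neg_iff_add_neg', ← Int.cast_natCast (R := ℝ), ← Int.cast_add, Int.cast_lt_zero]

lemma cfun_eq_rootCount (hlam : IsLambdaVec 𝔞 𝔟 m d lam)
    (hlen : ((𝔞 : ℤ) - 𝔟).toNat + 1 + ∑ j ∈ range B, m j = d)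
    (h𝔟 : 𝔟 ≤ 𝔞) : Cfun lam = rootCount B 𝔞 𝔟 m := by
  have hd : ((𝔞 : ℤ) - 𝔟).toNat + 1 ≤ d := by omega
  have htail : ∀ p : Fin d, ((𝔞 : ℤ) - 𝔟).toNat + 1 ≤ p.val →
      ∑ q, (if p < q ∧ lam p < lam q then 1 else 0) +
        ∑ q, (if p < q ∧ lam p + lam q < 0 then 1 else 0) + (if lam p < 0 then 1 else 0) = 0 := by
    intro p hp
    have hq : ∀ q : Fin d, p < q → 0 ≤ lam q ∧ lam q ≤ lam p := fun q hpq =>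
      ⟨hlam.nonneg_of_tail hlen (hp.trans hpq.le), hlam.2.1 p q hp hpq.le⟩
    have hp₀ := hlam.nonneg_of_tail hlen hp
    simp only [Nat.add_eq_zero_iff, sum_eq_zero_iff, mem_univ, true_implies, ite_eq_right_iff]
    refine ⟨⟨fun q hq' => ?_, fun q hq' => ?_⟩, fun h => ?_⟩ <;> exfalso
    · linarith [hq q hq'.1, hq'.2]
    · linarith [hq q hq'.1, hq'.2]
    · linarith
  calc Cfun lam = ∑ p, (∑ q, (if p < q ∧ lam p < lam q then 1 else 0) +
        ∑ q, (if p < q ∧ lam p + lam q < 0 then 1 else 0) + (if lam p < 0 then 1 else 0)) := by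
        simp only [Cfun, card_filter, Fintype.sum_prod_type, sum_add_distrib]
    _ = ∑ p : Fin d with p.val < ((𝔞 : ℤ) - 𝔟).toNat + 1, rootCountTerm B 𝔞 𝔟 m (𝔞 - p.val) := by
        rw [← sum_filter_lt_add_sum_filter_le (((𝔞 : ℤ) - 𝔟).toNat + 1),
          sum_eq_zero fun p hp => htail p (mem_filter.mp hp).2, add_zero]
        refine sum_congr rfl fun p hp => ?_
        have hp := (mem_filter.mp hp).2
        rw [hlam.sum_lt_of_head hlen hp, hlam.sum_add_neg_of_head hlen h𝔟 hp, rootCountTerm,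
          hlam.apply_of_head hp]
        simp only [Int.cast_lt_zero, mul_add, sum_add_distrib]
        ring
    _ = rootCount B 𝔞 𝔟 m := sum_head_reindex h𝔟 hd _

end IsLambdaVec

section Admissible

variable {N : ℕ → ℕ} {r : ℕ} {a : Fin r → ℕ}

/-- Removing the segment `(a i, …, -a (i+1))` from `N` removes the two Jumps `a i` and `a (i+1)`. -/
lemma admissibleB_neg_succ (hN : ResidualBData N r a) (i : Fin r) (hi : i.val + 1 < r) :
    AdmissibleB N (a i) (-(a ⟨i.val + 1, hi⟩ : ℤ)) := by
  obtain ⟨hodd, hanti, hcount, hN0⟩ := hN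
  set i' : Fin r := ⟨i.val + 1, hi⟩
  have hii' : i < i' := Fin.lt_def.mpr (Nat.lt_succ_self _)
  have hlt : a i' < a i := hanti hii'
  have hr : 3 ≤ r := by obtain ⟨k, rfl⟩ := hodd; omega
  have hs : #(univ \ {i, i'}) = r - 2 := by
    rw [card_sdiff_of_subset (subset_univ _), card_pair hii'.ne, card_univ, Fintype.card_fin]
  let m : ℕ → ℕ := fun j => if j = 0 then (r - 3) / 2 else #{k ∈ univ \ {i, i'} | j ≤ a k}
  have hm : IsResidualSegmentB m := by
    refine isResidualSegmentB_of_subset hanti _ ?_ (fun j hj => if_neg (by omega)) ?_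
    · rw [hs]; obtain ⟨k, rfl⟩ := hodd; exact ⟨k - 1, by omega⟩
    · rw [hs]; rfl
  refine ⟨by omega, by omega, m, hm, fun j => ?_⟩
  rcases Nat.eq_zero_or_pos j with rfl | hj
  · rw [hN0, segCount_zero_of_nonpos _ (by omega)]
    simp only [m, if_true]
    omega
  · simp only [m, if_neg hj.ne']
    rw [hcount j hj, segCount_of_one_le _ _ hj, card_filter, card_filter,
      ← sum_sdiff (subset_univ {i, i'}), sum_pair hii'.ne]
    split_ifs <;> omega

/-- For `a (i+1) < t < a i` no Jump equals `t`, so `N (t + 1) = N t`; withdrawing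
`(a i, …, -t)` would then leave `m (t + 1) = m t + 1`, impossible for a residual segment. -/
lemma neg_succ_le_of_admissible (hN : ResidualBData N r a) (i : Fin r) (hi : i.val + 1 < r)
    {𝔟 : ℤ} {m : ℕ → ℕ} (h𝔞𝔟 : 0 < (a i : ℤ) + 𝔟) (hm : IsResidualSegmentB m)
    (hNm : ∀ j, N j = m j + segCount (a i) 𝔟 j) :
    -(a ⟨i.val + 1, hi⟩ : ℤ) ≤ 𝔟 := by
  by_contra! h𝔟
  set t := (-𝔟).toNat
  have ht : 1 ≤ t := by omega
  have hjump : ∀ k, a k ≠ t := by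
    intro k hk
    rcases le_or_gt k i with hki | hik
    · have := hN.2.1.antitone hki
      omega
    · have := hN.2.1.antitone (Fin.le_def.mpr (Fin.lt_def.mp hik) : (⟨i.val + 1, hi⟩ : Fin r) ≤ k)
      omega
  have hNt := hN.succ_eq ht hjump
  have hmt := hm.succ_le ht
  have h₁ := hNm t
  have h₂ := hNm (t + 1)
  rw [segCount_of_one_le _ _ ht] at h₁
  rw [segCount_of_one_le _ _ (by omega)] at h₂
  split_ifs at h₁ h₂ <;> omega

end Admissible

section Length

variable {N m : ℕ → ℕ} {B 𝔞 : ℕ} {c : ℤ}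

lemma natAbs_lt_of_mem_Icc (hN : ∀ j, B ≤ j → N j = 0) (hNm : ∀ j, N j = m j + segCount 𝔞 c j)
    {k : ℤ} (hk : k ∈ Icc c (𝔞 : ℤ)) : k.natAbs < B := by
  by_contra! hB
  have hpos : 0 < segCount 𝔞 c k.natAbs := card_pos.mpr ⟨k, mem_filter.mpr ⟨hk, rfl⟩⟩
  have := hNm k.natAbs
  rw [hN _ hB] at this
  omega

lemma segment_length_add_sum_eq (hN : ∀ j, B ≤ j → N j = 0) {d : ℕ}
    (hd : ∑ j ∈ range B, N j = d) (hNm : ∀ j, N j = m j + segCount 𝔞 c j) (hc : c ≤ 𝔞) :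
    ((𝔞 : ℤ) - c).toNat + 1 + ∑ j ∈ range B, m j = d := by
  rw [← hd, sum_congr rfl fun j _ => hNm j, sum_add_distrib,
    sum_segCount fun k hk => natAbs_lt_of_mem_Icc hN hNm hk, Int.card_Icc]
  omega

end Length

theorem statement7_general (N : ℕ → ℕ) (r : ℕ) (a : Fin r → ℕ)
    (hN : ResidualBData N r a)
    (d : ℕ)
    (hd : ∃ B : ℕ, (∀ j, B ≤ j → N j = 0) ∧ ∑ j ∈ Finset.range B, N j = d)
    (i : Fin r) (hi : (i : ℕ) + 1 < r) :
    AdmissibleB N (a i) (-(a ⟨(i : ℕ) + 1, hi⟩ : ℤ)) ∧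
    ∀ (𝔟 : ℤ) (mb ma : ℕ → ℕ),
      (𝔟 < (a i : ℤ) ∧ 0 < (a i : ℤ) + 𝔟 ∧ IsResidualSegmentB mb ∧
        ∀ j : ℕ, N j = mb j + segCount (a i) 𝔟 j) →
      (IsResidualSegmentB ma ∧
        ∀ j : ℕ, N j = ma j + segCount (a i) (-(a ⟨(i : ℕ) + 1, hi⟩ : ℤ)) j) →
      ∀ (lamb lama : Fin d → ℝ),
        IsLambdaVec (a i) 𝔟 mb d lamb →
        IsLambdaVec (a i) (-(a ⟨(i : ℕ) + 1, hi⟩ : ℤ)) ma d lama →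
        Cfun lamb ≤ Cfun lama := by
  refine ⟨admissibleB_neg_succ hN i hi, ?_⟩
  rintro 𝔟 mb ma ⟨h𝔟𝔞, h𝔞𝔟, hmb, hNmb⟩ ⟨-, hNma⟩ lamb lama hlamb hlama
  obtain ⟨B, hB, hsum⟩ := hd
  have h𝔟 := neg_succ_le_of_admissible hN i hi h𝔞𝔟 hmb hNmb
  rw [hlamb.cfun_eq_rootCount (segment_length_add_sum_eq hB hsum hNmb h𝔟𝔞.le) h𝔟𝔞.le,
    hlama.cfun_eq_rootCount (segment_length_add_sum_eq hB hsum hNma (by omega)) (by omega)]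
  refine rootCount_mono h𝔟 h𝔟𝔞.le (fun k hk => natAbs_lt_of_mem_Icc hB hNma ?_) fun j => ?_
  · exact Ico_subset_Icc_self.trans (Icc_subset_Icc_right (by omega)) hk
  · rw [← hNmb, ← hNma]

/-- For a residual segment `N` of type B of length `d ≥ 1` with Jumps
`a 0 > a 1 > … > a (r-1)` (`r ≥ 3`) and consecutive Jumps `𝔞 = a i`, `a_- = a (i+1)`:
`𝔟 = -a_-` is admissible, and the count `C` is maximal at `λ_{-a_-}` among all `λ_𝔟`
with `𝔟` admissible. -/
theorem statement7 (N : ℕ → ℕ) (r : ℕ) (a : Fin r → ℕ) (hr : 3 ≤ r)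
    (hN : ResidualBData N r a)
    (d : ℕ) (hd1 : 1 ≤ d)
    (hd : ∃ B : ℕ, (∀ j, B ≤ j → N j = 0) ∧ ∑ j ∈ Finset.range B, N j = d)
    (i : Fin r) (hi : (i : ℕ) + 1 < r) :
    AdmissibleB N (a i) (-(a ⟨(i : ℕ) + 1, hi⟩ : ℤ)) ∧
    ∀ (𝔟 : ℤ) (mb ma : ℕ → ℕ),
      (𝔟 < (a i : ℤ) ∧ 0 < (a i : ℤ) + 𝔟 ∧ IsResidualSegmentB mb ∧
        ∀ j : ℕ, N j = mb j + segCount (a i) 𝔟 j) →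
      (IsResidualSegmentB ma ∧
        ∀ j : ℕ, N j = ma j + segCount (a i) (-(a ⟨(i : ℕ) + 1, hi⟩ : ℤ)) j) →
      ∀ (lamb lama : Fin d → ℝ),
        IsLambdaVec (a i) 𝔟 mb d lamb →
        IsLambdaVec (a i) (-(a ⟨(i : ℕ) + 1, hi⟩ : ℤ)) ma d lama →
        Cfun lamb ≤ Cfun lama :=
  statement7_general N r a hN d hd i hi
end

section
/- Let n be a residual segment of type B with Jumps a_1 > a_2 > … > a_r (r odd, r ≥ 3), and fix 1 ≤ i < r, so that a_i > a_{i+1} are two consecutive Jumps. Then: (1) there is a (unique) function n′ : ℕ → ℕ satisfying n(j) = n′(j) + (1 if a_{i+1} < j ≤ a_i) + (2 if 1 ≤ j ≤ a_{i+1}) + (1 if j = 0) for every j ∈ ℕ, and n′ is the multiplicity function of a residual segment of type B whose set of Jumps is {a_1, …, a_r} ∖ {a_i, a_{i+1}}; (2) for every c ∈ ℕ there is no residual segment m of type B satisfying n′(j) = m(j) + (2 if 1 ≤ j ≤ c) + (1 if j = 0) for every j ∈ ℕ, i.e. no further symmetric linear segment (c, c−1, …, −c) can be extracted from n′ so as to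 leave a residual segment of type B. -/
open Finset

lemma Finset.card_filter_orderEmbOfFin {α : Type*} [LinearOrder α] (s : Finset α) {k : ℕ}
    (h : #s = k) (p : α → Prop) [DecidablePred p] :
    #{l | p (s.orderEmbOfFin h l)} = #{t ∈ s | p t} := by
  conv_rhs => rw [← map_orderEmbOfFin_univ s h, filter_map, card_map]
  rfl

lemma card_filter_le_le_card_filter_succ_le_add_one {α : Type*} [Fintype α] [DecidableEq α]
    {a : α → ℕ} (ha : Function.Injective a) (j : ℕ) :
    #{t | j ≤ a t} ≤ #{t | j + 1 ≤ a t} + 1 := by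
  have hsplit : univ.filter (fun t => j ≤ a t)
      = univ.filter (fun t => j + 1 ≤ a t) ∪ univ.filter (fun t => a t = j) := by
    rw [← filter_or]; ext t; simp only [mem_filter, mem_univ, true_and]; omega
  have hfiber : #(univ.filter fun t => a t = j) ≤ 1 :=
    card_le_one.2 fun t ht u hu => ha <| by simp_all
  rw [hsplit]
  exact (card_union_le _ _).trans (by omega)

lemma card_filter_eq_card_filter_compl_pair_add {α : Type*} [Fintype α] [DecidableEq α]
    (p : α → Prop) [DecidablePred p] {i i' : α} (hii' : i ≠ i') :
    #{t | p t} = #{t ∈ {i, i'}ᶜ | p t} + (if p i then 1 else 0) + (if p i' then 1 else 0) := by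
  rw [card_filter, card_filter, ← sum_compl_add_sum {i, i'}, sum_pair hii', add_assoc]

namespace ResidualBData

variable {n : ℕ → ℕ} {r : ℕ} {a : Fin r → ℕ}

lemma apply_eq_card (h : ResidualBData n r a) {j : ℕ} (hj : 1 ≤ j) : n j = #{t | j ≤ a t} :=
  h.2.2.1 j hj

lemma apply_succ_le (h : ResidualBData n r a) {j : ℕ} (hj : 1 ≤ j) : n (j + 1) ≤ n j := by
  rw [h.apply_eq_card hj, h.apply_eq_card (by omega : 1 ≤ j + 1)]
  exact card_le_card <| monotone_filter_right _ fun t _ (ht : j + 1 ≤ a t) => by omega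

lemma apply_le_apply_succ_add_one (h : ResidualBData n r a) {j : ℕ} (hj : 1 ≤ j) :
    n j ≤ n (j + 1) + 1 := by
  rw [h.apply_eq_card hj, h.apply_eq_card (by omega : 1 ≤ j + 1)]
  exact card_filter_le_le_card_filter_succ_le_add_one h.2.1.injective j

lemma apply_one_le (h : ResidualBData n r a) : n 1 ≤ r := by
  rw [h.apply_eq_card le_rfl]
  exact (card_filter_le _ _).trans_eq (card_fin r)

lemma le_apply_one_add_one (h : ResidualBData n r a) : r ≤ n 1 + 1 := by
  rw [h.apply_eq_card le_rfl]
  simpa using card_filter_le_le_card_filter_succ_le_add_one h.2.1.injective 0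

theorem not_exists_withdraw_symmetric (h : ResidualBData n r a) (c : ℕ) :
    ¬ ∃ m : ℕ → ℕ, IsResidualSegmentB m ∧
      ∀ j : ℕ, n j = m j + (if 1 ≤ j ∧ j ≤ c then 2 else 0) + (if j = 0 then 1 else 0) := by
  rintro ⟨m, ⟨r', b, hm⟩, hnm⟩
  rcases Nat.eq_zero_or_pos c with rfl | hc
  · have h0 := hnm 0
    have h1 := hnm 1
    have := h.le_apply_one_add_one
    have := hm.apply_one_le
    obtain ⟨⟨s, rfl⟩, -, -, hn0⟩ := h
    obtain ⟨⟨t, rfl⟩, -, -, hm0⟩ := hm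
    split_ifs at h0 h1 <;> omega
  · have hc0 := hnm c
    have hc1 := hnm (c + 1)
    have := h.apply_le_apply_succ_add_one hc
    have := hm.apply_succ_le hc
    split_ifs at hc0 hc1 <;> omega

theorem exists_withdraw_jumps (h : ResidualBData n r a) {i i' : Fin r} (hii' : i < i') :
    ∃ (n' : ℕ → ℕ) (a' : Fin (r - 2) → ℕ), ResidualBData n' (r - 2) a' ∧
      Set.range a' = Set.range a \ {a i, a i'} ∧
      ∀ j, n j = n' j + (if a i' < j ∧ j ≤ a i then 1 else 0)
          + (if 1 ≤ j ∧ j ≤ a i' then 2 else 0) + (if j = 0 then 1 else 0) := by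
  obtain ⟨⟨s, hs⟩, hanti, hcard, hzero⟩ := h
  have hcompl : #({i, i'}ᶜ : Finset (Fin r)) = r - 2 := by
    rw [card_compl, card_pair hii'.ne, Fintype.card_fin]
  let e := ({i, i'}ᶜ : Finset (Fin r)).orderEmbOfFin hcompl
  refine ⟨fun j => if j = 0 then (r - 2 - 1) / 2 else #{l | j ≤ a (e l)}, a ∘ e,
    ⟨⟨s - 1, by omega⟩, hanti.comp_strictMono e.strictMono, fun j hj => if_neg (by omega), rfl⟩,
    ?_, fun j => ?_⟩
  · rw [Set.range_comp, range_orderEmbOfFin, coe_compl, Set.compl_eq_univ_sdiff,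
      Set.image_sdiff hanti.injective, Set.image_univ, coe_pair, Set.image_pair]
  · rcases Nat.eq_zero_or_pos j with rfl | hj
    · simp only [hzero, ↓reduceIte]; split_ifs <;> omega
    · have hai : a i' < a i := hanti hii'
      rw [hcard j hj, card_filter_eq_card_filter_compl_pair_add _ hii'.ne]
      simp only [hj.ne', ↓reduceIte, e]
      rw [card_filter_orderEmbOfFin _ _ (fun t => j ≤ a t)]
      split_ifs <;> omega

end ResidualBData

theorem statement9_general (n : ℕ → ℕ) (r : ℕ) (a : Fin r → ℕ)
    (hn : ResidualBData n r a)
    (i : Fin r) (hi : (i : ℕ) + 1 < r) :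
    (∃! n' : ℕ → ℕ, ∀ j : ℕ,
        n j = n' j + (if a ⟨(i : ℕ) + 1, hi⟩ < j ∧ j ≤ a i then 1 else 0)
          + (if 1 ≤ j ∧ j ≤ a ⟨(i : ℕ) + 1, hi⟩ then 2 else 0)
          + (if j = 0 then 1 else 0)) ∧
    ∀ n' : ℕ → ℕ,
      (∀ j : ℕ,
        n j = n' j + (if a ⟨(i : ℕ) + 1, hi⟩ < j ∧ j ≤ a i then 1 else 0)
          + (if 1 ≤ j ∧ j ≤ a ⟨(i : ℕ) + 1, hi⟩ then 2 else 0)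
          + (if j = 0 then 1 else 0)) →
      (∃ a' : Fin (r - 2) → ℕ, ResidualBData n' (r - 2) a' ∧
        Set.range a' = Set.range a \ {a i, a ⟨(i : ℕ) + 1, hi⟩}) ∧
      ∀ c : ℕ, ¬ ∃ m : ℕ → ℕ, IsResidualSegmentB m ∧
        ∀ j : ℕ, n' j = m j + (if 1 ≤ j ∧ j ≤ c then 2 else 0)
          + (if j = 0 then 1 else 0) := by
  obtain ⟨n₀, a', hn₀, hrange, hdecomp⟩ :=
    hn.exists_withdraw_jumps (i' := ⟨i + 1, hi⟩) (Fin.lt_def.2 i.val.lt_succ_self)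
  refine ⟨⟨n₀, hdecomp, fun n' h => funext fun j => ?_⟩, fun n' h => ?_⟩
  · have := h j
    have := hdecomp j
    omega
  · obtain rfl : n' = n₀ := funext fun j => by
      have := h j
      have := hdecomp j
      omega
    exact ⟨⟨a', hn₀, hrange⟩, hn₀.not_exists_withdraw_symmetric⟩

/-- Withdrawing the linear segment `(a i, …, -a (i+1))` attached to two
consecutive Jumps of a type-B residual segment `n` leaves a unique multiplicity function
`n'`; it is a residual segment of type B whose Jumps are those of `n` with `a i` and
`a (i+1)` removed, and no further symmetric linear segment `(c, c-1, …, -c)` can be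
withdrawn from `n'` so as to leave a residual segment of type B. -/
theorem statement9 (n : ℕ → ℕ) (r : ℕ) (a : Fin r → ℕ) (hr : 3 ≤ r)
    (hn : ResidualBData n r a)
    (i : Fin r) (hi : (i : ℕ) + 1 < r) :
    (∃! n' : ℕ → ℕ, ∀ j : ℕ,
        n j = n' j + (if a ⟨(i : ℕ) + 1, hi⟩ < j ∧ j ≤ a i then 1 else 0)
          + (if 1 ≤ j ∧ j ≤ a ⟨(i : ℕ) + 1, hi⟩ then 2 else 0)
          + (if j = 0 then 1 else 0)) ∧
    ∀ n' : ℕ → ℕ,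
      (∀ j : ℕ,
        n j = n' j + (if a ⟨(i : ℕ) + 1, hi⟩ < j ∧ j ≤ a i then 1 else 0)
          + (if 1 ≤ j ∧ j ≤ a ⟨(i : ℕ) + 1, hi⟩ then 2 else 0)
          + (if j = 0 then 1 else 0)) →
      (∃ a' : Fin (r - 2) → ℕ, ResidualBData n' (r - 2) a' ∧
        Set.range a' = Set.range a \ {a i, a ⟨(i : ℕ) + 1, hi⟩}) ∧
      ∀ c : ℕ, ¬ ∃ m : ℕ → ℕ, IsResidualSegmentB m ∧
        ∀ j : ℕ, n' j = m j + (if 1 ≤ j ∧ j ≤ c then 2 else 0)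
          + (if j = 0 then 1 else 0) :=
  statement9_general n r a hn i hi
end

section
/- Let n be a residual segment of type B with Jumps a_1 > … > a_r. Let 𝔞, 𝔟 ∈ ℤ with 𝔞 > 𝔟 and 𝔞 + 𝔟 > 0, and suppose there exists a residual segment m of type B such that n(j) = m(j) + #{k ∈ ℤ : 𝔟 ≤ k ≤ 𝔞 and |k| = j} for every j ∈ ℕ (i.e. withdrawing the linear segment (𝔞, 𝔞−1, …, 𝔟) from n leaves a residual segment of type B; equivalently, the vector formed by the segment (𝔞, …, 𝔟) followed by the entries of m lies in the type-B Weyl group orbit of the dominant point attached to n). Then 𝔞 is a Jump of n, i.e. 𝔞 ∈ {a_1, …, a_r}; and if moreover some Jump of n is strictly smaller than 𝔞, then 𝔟 ≥ −a_−, where a_− denotes the largest Jump of n strictly smaller than 𝔞. -/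
open Finset

lemma exists_eq_of_card_filter_succ_le_lt {ι : Type*} [Fintype ι] (a : ι → ℕ) {j : ℕ}
    (h : #{i | j + 1 ≤ a i} < #{i | j ≤ a i}) : ∃ i, a i = j := by
  by_contra! hne
  refine h.ne (congrArg card (filter_congr fun i _ => ?_))
  have := hne i
  omega

lemma StrictAnti.filter_lt_eq_filter_le {r : ℕ} {a : Fin r → ℕ} (ha : StrictAnti a)
    (i : Fin r) (hi : (i : ℕ) + 1 < r) :
    (univ.filter fun k => a ⟨i + 1, hi⟩ < a k) = univ.filter fun k => a i ≤ a k :=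
  filter_congr fun k _ => by
    simp only [ha.lt_iff_gt, ha.le_iff_ge, Fin.lt_def, Fin.le_def]
    omega

namespace ResidualBData

variable {n : ℕ → ℕ} {r : ℕ} {a : Fin r → ℕ}

lemma apply_le_apply (hn : ResidualBData n r a) {j j' : ℕ} (hj : 1 ≤ j) (hjj' : j ≤ j') :
    n j' ≤ n j := by
  rw [hn.2.2.1 j hj, hn.2.2.1 j' (hj.trans hjj')]
  exact card_le_card (monotone_filter_right _ fun _ _ h => hjj'.trans h)

end ResidualBData

namespace Int

lemma filter_natAbs_eq_Icc_self {b : ℤ} {A : ℕ} (hb : -(A : ℤ) < b) (hbA : b ≤ A) :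
    ((Icc b (A : ℤ)).filter fun k => k.natAbs = A) = {(A : ℤ)} := by
  ext k
  simp only [mem_filter, mem_Icc, mem_singleton]
  omega

lemma filter_natAbs_eq_Icc_of_lt {b : ℤ} {A j : ℕ} (hAj : A < j) (hb : -(j : ℤ) < b) :
    ((Icc b (A : ℤ)).filter fun k => k.natAbs = j) = ∅ := by
  ext k
  simp only [mem_filter, mem_Icc, notMem_empty, iff_false, not_and]
  omega

lemma two_le_card_filter_natAbs_eq_Icc {b c : ℤ} {t : ℕ} (ht : 0 < t) (hb : b ≤ -(t : ℤ))
    (hc : (t : ℤ) ≤ c) : 2 ≤ ((Icc b c).filter fun k => k.natAbs = t).card := by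
  have hsub : ({(t : ℤ), -(t : ℤ)} : Finset ℤ) ⊆ (Icc b c).filter fun k => k.natAbs = t := by
    intro k hk
    simp only [mem_insert, mem_singleton] at hk
    simp only [mem_filter, mem_Icc]
    omega
  calc 2 = ({(t : ℤ), -(t : ℤ)} : Finset ℤ).card := (card_pair (by omega)).symm
    _ ≤ _ := card_le_card hsub

end Int

/-- If withdrawing the linear segment `(𝔞, 𝔞-1, …, 𝔟)` (with `𝔞 > 𝔟`
and `𝔞 + 𝔟 > 0`) from a type-B residual segment `n` with Jumps `a 0 > … > a (r-1)`
leaves a residual segment of type B, then `𝔞` is a Jump of `n`; and if some Jump of `n`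
is strictly smaller than `𝔞` — i.e. the witnessing index `i` satisfies `i + 1 < r` —
then `𝔟 ≥ -a (i+1)`, where `a (i+1)` is the largest Jump strictly smaller than `𝔞`. -/
theorem statement10 (n : ℕ → ℕ) (r : ℕ) (a : Fin r → ℕ)
    (hn : ResidualBData n r a)
    (𝔞 𝔟 : ℤ) (hab : 𝔟 < 𝔞) (hab' : 0 < 𝔞 + 𝔟)
    (h : ∃ m : ℕ → ℕ, IsResidualSegmentB m ∧
      ∀ j : ℕ, n j = m j + ((Finset.Icc 𝔟 𝔞).filter fun k => k.natAbs = j).card) :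
    ∃ i : Fin r, (a i : ℤ) = 𝔞 ∧
      ∀ hi : (i : ℕ) + 1 < r, -(a ⟨(i : ℕ) + 1, hi⟩ : ℤ) ≤ 𝔟 := by
  obtain ⟨-, ha, hcount, -⟩ := hn
  obtain ⟨m, ⟨_, _, hmB⟩, hm⟩ := h
  lift 𝔞 to ℕ using (by omega) with A
  have hA : 1 ≤ A := by omega
  have hmA : n A = m A + 1 := by
    rw [hm A, Int.filter_natAbs_eq_Icc_self (by omega) (by omega), card_singleton]
  obtain ⟨i, hi⟩ : ∃ i, a i = A := by
    apply exists_eq_of_card_filter_succ_le_lt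
    have hmA1 : n (A + 1) = m (A + 1) := by
      rw [hm (A + 1), Int.filter_natAbs_eq_Icc_of_lt (by omega) (by omega), card_empty, add_zero]
    rw [← hcount A hA, ← hcount (A + 1) (by omega)]
    have hmono : m (A + 1) ≤ m A := hmB.apply_le_apply hA (Nat.le_add_right A 1)
    omega
  refine ⟨i, by rw [hi], fun hi1 => ?_⟩
  by_contra! hb
  have hnext : a ⟨i + 1, hi1⟩ < A := hi ▸ ha (Fin.lt_def.2 (i : ℕ).lt_add_one)
  set t := a ⟨i + 1, hi1⟩ + 1
  have hnt : n t = n A := by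
    rw [hcount t (by omega), hcount A hA, ← hi, ← ha.filter_lt_eq_filter_le i hi1]
    rfl
  have hmt := hm t
  have hpair : 2 ≤ ((Icc 𝔟 (A : ℤ)).filter fun k => k.natAbs = t).card :=
    Int.two_le_card_filter_natAbs_eq_Icc (by omega) (by omega) (by omega)
  have hmono : m A ≤ m t := hmB.apply_le_apply (by omega) hnext
  omega
end

section
/- Let n be a residual segment of type B. Then there do not exist an integer s ≥ 1 and natural numbers c_1, …, c_s ≥ 0 such that n(0) = s and n(j) = 2 · #{k : c_k ≥ j} for every j ≥ 1. Equivalently, the multiset attached to a type-B residual segment is never the disjoint union of the absolute-value multisets of finitely many symmetric linear segments (c_k, c_k − 1, …, 0, …, −c_k); so a vector obtained by concatenating symmetric linear segments never lies in the type-B Weyl group orbit of the dominant point attached to a residual segment. -/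
open Finset

theorem StrictAnti.card_filter_apply_zero_le {α : Type*} [LinearOrder α] {r : ℕ}
    {a : Fin (r + 1) → α} (ha : StrictAnti a) : #{i | a 0 ≤ a i} = 1 := by
  rw [card_eq_one]
  refine ⟨0, ?_⟩
  ext i
  simp [ha.le_iff_ge]

theorem ResidualBData.exists_eq_one {n : ℕ → ℕ} {r : ℕ} {a : Fin r → ℕ}
    (h : ResidualBData n r a) (hn0 : 1 ≤ n 0) : ∃ j, 1 ≤ j ∧ n j = 1 := by
  obtain ⟨-, ha, hn, hn0_eq⟩ := h
  obtain ⟨m, rfl⟩ : ∃ m, r = m + 2 := ⟨r - 2, by omega⟩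
  have h_top_pos : 1 ≤ a 0 := Nat.one_le_iff_ne_zero.mpr (ha Fin.zero_lt_one).ne_bot
  exact ⟨a 0, h_top_pos, (hn _ h_top_pos).trans ha.card_filter_apply_zero_le⟩

/-- The multiset attached to a type-B residual segment is never the
disjoint union of the absolute-value multisets of finitely many symmetric linear segments
`(c k, c k - 1, …, -c k)`: there are no `s ≥ 1` and `c : Fin s → ℕ` with `n 0 = s` and
`n j = 2 · #{k : c k ≥ j}` for every `j ≥ 1`. -/
theorem statement11 (n : ℕ → ℕ) (hn : IsResidualSegmentB n) :
    ¬ ∃ (s : ℕ) (c : Fin s → ℕ), 1 ≤ s ∧ n 0 = s ∧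
      ∀ j : ℕ, 1 ≤ j →
        n j = 2 * (Finset.univ.filter fun k : Fin s => j ≤ c k).card := by
  rintro ⟨s, c, hs, h0, hc⟩
  obtain ⟨r, a, h⟩ := hn
  obtain ⟨j, hj, hnj⟩ := h.exists_eq_one (h0 ▸ hs)
  have := hc j hj
  omega
end

section
/- Let m, q ≥ 1 be integers, set N = m + q + 3, and work in ℝ^N with its standard basis e_1, …, e_N and standard inner product. Let Θ = {e_i − e_{i+1} : 1 ≤ i ≤ m} ∪ {e_i − e_{i+1} : m+3 ≤ i ≤ N−1} (two type-A components of sizes m and q separated by a gap of two consecutive simple roots), and let p be the orthogonal projection onto the orthogonal complement of the linear span of Θ. Then for the two consecutive simple roots α = e_{m+1} − e_{m+2} and β = e_{m+2} − e_{m+3}, which lie outside Θ, one has p(α) = (1/(m+1))(e_1 + ⋯ + e_{m+1}) − e_{m+2} and p(β) = e_{m+2} − (1/(q+1))(e_{m+3} + ⋯ + e_N); consequently ⟨p(α), p(β)⟩ = −1, ‖p(α)‖² = 1 + 1/(m+1), ‖p(β)‖² = 1 + 1/(q+1), and neither of the Cartan numbers 2⟨p(α), p(β)⟩/‖p(β)‖²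 = −2(q+1)/(q+2) and 2⟨p(α), p(β)⟩/‖p(α)‖² = −2(m+1)/(m+2) is an integer. In particular the pair (p(α), p(β)) violates the crystallographic integrality condition, so p(α) and p(β) cannot both belong to a root system. -/
/-- The `i`-th standard basis vector of `ℝ^N`. -/
noncomputable def esingle (N : ℕ) (i : Fin N) : EuclideanSpace ℝ (Fin N) :=
  EuclideanSpace.single i 1

/-- With `N = m + q + 3`, the set `Θ` consisting of the simple roots
`e_i - e_{i+1}` for `1 ≤ i ≤ m` and for `m + 3 ≤ i ≤ N - 1` (1-based), i.e. in 0-based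
indexing: the pairs with first index `< m` or `≥ m + 2`.  These are two type-A components
of sizes `m` and `q` separated by a gap of two consecutive simple roots. -/
noncomputable def thetaSet (m q : ℕ) : Set (EuclideanSpace ℝ (Fin (m + q + 3))) :=
  {v | ∃ (i : ℕ) (h : i + 1 < m + q + 3),
    (i < m ∨ m + 2 ≤ i) ∧
    v = esingle (m + q + 3) ⟨i, by omega⟩ - esingle (m + q + 3) ⟨i + 1, h⟩}

/-!
The span of `Θ` contains every difference `e_i - e_j` of basis vectors lying in the same block,
`{0, …, m}` or `{m + 2, …, N - 1}` (0-based), and its orthogonal complement consists of the vectors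
constant on each block. So the projection sends `e_m` to the mean of the left block and `e_{m+2}`
to the mean of the right block, and fixes `e_{m+1}`. The inner products then follow from the
disjointness of the blocks, and for `n ≥ 1` the Cartan number `-2(n+1)/(n+2)` lies strictly between
`-2` and `-1`.
-/

open Finset

theorem Submodule.sub_mem_of_forall_sub_succ_mem {R M : Type*} [Ring R] [AddCommGroup M]
    [Module R M] {K : Submodule R M} {f : ℕ → M} {a b : ℕ}
    (h : ∀ k, a ≤ k → k < b → f k - f (k + 1) ∈ K) {i j : ℕ} (hi : a ≤ i) (hj : a ≤ j)
    (hib : i ≤ b) (hjb : j ≤ b) : f i - f j ∈ K := by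
  wlog hij : i ≤ j generalizing i j
  · exact sub_mem_comm_iff.1 (this hj hi hjb hib (by omega))
  induction j, hij using Nat.le_induction with
  | base => simp
  | succ k hik ih =>
    simpa using K.add_mem (ih (by omega) (by omega)) (h k (by omega) (by omega))

theorem Submodule.sub_inv_card_smul_sum_mem {K E ι : Type*} [DivisionRing K] [CharZero K]
    [AddCommGroup E] [Module K E] {S : Submodule K E} {s : Finset ι} {f : ι → E} {i : ι}
    (hi : i ∈ s) (h : ∀ j ∈ s, f i - f j ∈ S) : f i - (#s : K)⁻¹ • ∑ j ∈ s, f j ∈ S := by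
  have hs : (#s : K) ≠ 0 := Nat.cast_ne_zero.2 (card_ne_zero_of_mem hi)
  have hmean : f i - (#s : K)⁻¹ • ∑ j ∈ s, f j = (#s : K)⁻¹ • ∑ j ∈ s, (f i - f j) := by
    rw [sum_sub_distrib, sum_const, smul_sub, ← Nat.cast_smul_eq_nsmul K, smul_smul,
      inv_mul_cancel₀ hs, one_smul]
  rw [hmean]
  exact S.smul_mem _ (S.sum_mem h)

theorem mem_orthogonal_span_of_forall_inner_eq_zero {𝕜 E : Type*} [RCLike 𝕜]
    [NormedAddCommGroup E] [InnerProductSpace 𝕜 E] {S : Set E} {v : E}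
    (h : ∀ u ∈ S, inner 𝕜 u v = 0) : v ∈ (Submodule.span 𝕜 S)ᗮ :=
  (Submodule.isOrtho_span.2 fun u hu w hw => by rw [Set.mem_singleton_iff.1 hw]; exact h u hu).ge
    (Submodule.mem_span_singleton_self v)

section blockMean

variable {N : ℕ}

noncomputable def blockMean (s : Finset (Fin N)) : EuclideanSpace ℝ (Fin N) :=
  (#s : ℝ)⁻¹ • ∑ j ∈ s, esingle N j

theorem blockMean_apply (s : Finset (Fin N)) (j : Fin N) :
    blockMean s j = if j ∈ s then (#s : ℝ)⁻¹ else 0 := by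
  simp [blockMean, esingle]

theorem inner_esingle_left (i : Fin N) (v : EuclideanSpace ℝ (Fin N)) :
    inner ℝ (esingle N i) v = v i := by
  simp [esingle, EuclideanSpace.inner_single_left]

theorem inner_esingle_self (i : Fin N) : inner ℝ (esingle N i) (esingle N i) = 1 := by
  simp [esingle]

theorem inner_blockMean_left (s : Finset (Fin N)) (v : EuclideanSpace ℝ (Fin N)) :
    inner ℝ (blockMean s) v = (#s : ℝ)⁻¹ * ∑ j ∈ s, v j := by
  simp [blockMean, inner_smul_left, sum_inner, inner_esingle_left]

theorem inner_blockMean_esingle_of_notMem {s : Finset (Fin N)} {k : Fin N} (hk : k ∉ s) :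
    inner ℝ (blockMean s) (esingle N k) = 0 := by
  rw [inner_blockMean_left, sum_eq_zero, mul_zero]
  intro j hj
  simp [esingle, show j ≠ k from fun h => hk (h ▸ hj)]

theorem inner_blockMean_of_disjoint {s t : Finset (Fin N)} (hst : Disjoint s t) :
    inner ℝ (blockMean s) (blockMean t) = 0 := by
  rw [inner_blockMean_left, sum_eq_zero, mul_zero]
  intro j hj
  rw [blockMean_apply, if_neg (disjoint_left.1 hst hj)]

theorem inner_blockMean_self {s : Finset (Fin N)} (hs : s.Nonempty) :
    inner ℝ (blockMean s) (blockMean s) = (#s : ℝ)⁻¹ := by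
  have : (#s : ℝ) ≠ 0 := by simpa using hs.ne_empty
  simp only [inner_blockMean_left, blockMean_apply]
  rw [sum_ite_mem, inter_self, sum_const, nsmul_eq_mul, ← mul_assoc, inv_mul_cancel₀ this, one_mul]

end blockMean

section gap

variable (m q : ℕ)

abbrev leftBlock : Finset (Fin (m + q + 3)) := Iic ⟨m, by omega⟩

abbrev rightBlock : Finset (Fin (m + q + 3)) := Ici ⟨m + 2, by omega⟩

noncomputable def projAlpha : EuclideanSpace ℝ (Fin (m + q + 3)) :=
  blockMean (leftBlock m q) - esingle _ ⟨m + 1, by omega⟩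

noncomputable def projBeta : EuclideanSpace ℝ (Fin (m + q + 3)) :=
  esingle _ ⟨m + 1, by omega⟩ - blockMean (rightBlock m q)

variable {m q}

theorem esingle_sub_esingle_mem_span_thetaSet {i j : Fin (m + q + 3)}
    (hij : (i ≤ m ∧ j ≤ m) ∨ (m + 2 ≤ i ∧ m + 2 ≤ j)) :
    esingle _ i - esingle _ j ∈ Submodule.span ℝ (thetaSet m q) := by
  -- the basis indexed by `ℕ`, extended by zero, so that the telescoping lemma applies
  let f : ℕ → EuclideanSpace ℝ (Fin (m + q + 3)) := fun k =>
    if hk : k < m + q + 3 then esingle _ ⟨k, hk⟩ else 0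
  have hf : ∀ k : Fin (m + q + 3), f k = esingle _ k := fun k => dif_pos k.2
  have hstep : ∀ k, (k < m ∨ m + 2 ≤ k) → k + 1 < m + q + 3 →
      f k - f (k + 1) ∈ Submodule.span ℝ (thetaSet m q) := fun k hk hkN =>
    Submodule.subset_span ⟨k, hkN, hk, by simp [f, hkN, show k < m + q + 3 by omega]⟩
  rw [← hf i, ← hf j]
  rcases hij with ⟨hi, hj⟩ | ⟨hi, hj⟩
  · exact Submodule.sub_mem_of_forall_sub_succ_mem (a := 0) (b := m)
      (fun k _ hk => hstep k (.inl hk) (by omega)) (by omega) (by omega) hi hj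
  · exact Submodule.sub_mem_of_forall_sub_succ_mem (a := m + 2) (b := m + q + 2)
      (fun k hk _ => hstep k (.inr hk) (by omega)) hi hj (by omega) (by omega)

theorem esingle_sub_blockMean_leftBlock_mem :
    esingle _ ⟨m, by omega⟩ - blockMean (leftBlock m q) ∈ Submodule.span ℝ (thetaSet m q) :=
  Submodule.sub_inv_card_smul_sum_mem (by simp) fun j hj =>
    esingle_sub_esingle_mem_span_thetaSet (.inl ⟨le_rfl, by simpa [Fin.le_def] using hj⟩)

theorem esingle_sub_blockMean_rightBlock_mem :
    esingle _ ⟨m + 2, by omega⟩ - blockMean (rightBlock m q) ∈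
      Submodule.span ℝ (thetaSet m q) :=
  Submodule.sub_inv_card_smul_sum_mem (by simp) fun j hj =>
    esingle_sub_esingle_mem_span_thetaSet (.inr ⟨le_rfl, by simpa [Fin.le_def] using hj⟩)

theorem projAlpha_apply (j : Fin (m + q + 3)) :
    projAlpha m q j = if (j : ℕ) ≤ m then 1 / ((m : ℝ) + 1)
      else if (j : ℕ) = m + 1 then -1 else 0 := by
  simp only [projAlpha, PiLp.sub_apply, blockMean_apply, Fin.card_Iic, mem_Iic, Fin.le_def,
    esingle, PiLp.single_apply, Fin.ext_iff]
  split_ifs <;> first | omega | simp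

theorem projBeta_apply (j : Fin (m + q + 3)) :
    projBeta m q j = if (j : ℕ) = m + 1 then 1
      else if m + 2 ≤ (j : ℕ) then -(1 / ((q : ℝ) + 1)) else 0 := by
  simp only [projBeta, PiLp.sub_apply, blockMean_apply, Fin.card_Ici, mem_Ici, Fin.le_def,
    esingle, PiLp.single_apply, Fin.ext_iff]
  split_ifs <;> first | omega | simp [show m + q + 3 - (m + 2) = q + 1 by omega]

theorem mem_orthogonal_span_thetaSet {v : EuclideanSpace ℝ (Fin (m + q + 3))}
    (h : ∀ k (hk : k + 1 < m + q + 3), (k < m ∨ m + 2 ≤ k) → v ⟨k, by omega⟩ = v ⟨k + 1, hk⟩) :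
    v ∈ (Submodule.span ℝ (thetaSet m q))ᗮ := by
  refine mem_orthogonal_span_of_forall_inner_eq_zero ?_
  rintro _ ⟨k, hk, hkΘ, rfl⟩
  rw [inner_sub_left, inner_esingle_left, inner_esingle_left, h k hk hkΘ, sub_self]

theorem projAlpha_mem_orthogonal : projAlpha m q ∈ (Submodule.span ℝ (thetaSet m q))ᗮ :=
  mem_orthogonal_span_thetaSet fun k hk hkΘ => by
    simp only [projAlpha_apply]
    split_ifs <;> first | rfl | omega

theorem projBeta_mem_orthogonal : projBeta m q ∈ (Submodule.span ℝ (thetaSet m q))ᗮ :=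
  mem_orthogonal_span_thetaSet fun k hk hkΘ => by
    simp only [projBeta_apply]
    split_ifs <;> first | rfl | omega

theorem starProjection_alpha_eq_projAlpha :
    (Submodule.span ℝ (thetaSet m q))ᗮ.starProjection
      (esingle _ ⟨m, by omega⟩ - esingle _ ⟨m + 1, by omega⟩) =
      projAlpha m q := by
  refine Submodule.eq_starProjection_of_mem_orthogonal projAlpha_mem_orthogonal
    (Submodule.le_orthogonal_orthogonal _ ?_)
  convert esingle_sub_blockMean_leftBlock_mem (q := q) using 1
  rw [projAlpha]
  abel

theorem starProjection_beta_eq_projBeta :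
    (Submodule.span ℝ (thetaSet m q))ᗮ.starProjection
      (esingle _ ⟨m + 1, by omega⟩ - esingle _ ⟨m + 2, by omega⟩) =
      projBeta m q := by
  refine Submodule.eq_starProjection_of_mem_orthogonal projBeta_mem_orthogonal
    (Submodule.le_orthogonal_orthogonal _ ?_)
  rw [← neg_mem_iff]
  convert esingle_sub_blockMean_rightBlock_mem (m := m) (q := q) using 1
  rw [projBeta]
  abel

theorem inner_projAlpha_projBeta : inner ℝ (projAlpha m q) (projBeta m q) = -1 := by
  rw [projAlpha, projBeta, inner_sub_left, inner_sub_right, inner_sub_right,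
    inner_blockMean_esingle_of_notMem (by simp [Fin.le_def]),
    inner_blockMean_of_disjoint (by simp [disjoint_left, Fin.le_def]; omega),
    inner_esingle_self, real_inner_comm,
    inner_blockMean_esingle_of_notMem (by simp [Fin.le_def])]
  ring

theorem norm_projAlpha_sq : ‖projAlpha m q‖ ^ 2 = 1 + 1 / ((m : ℝ) + 1) := by
  rw [projAlpha, norm_sub_sq_real, ← real_inner_self_eq_norm_sq, ← real_inner_self_eq_norm_sq,
    inner_blockMean_self (by simp), inner_blockMean_esingle_of_notMem (by simp [Fin.le_def]),
    inner_esingle_self, Fin.card_Iic]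
  push_cast
  ring

theorem norm_projBeta_sq : ‖projBeta m q‖ ^ 2 = 1 + 1 / ((q : ℝ) + 1) := by
  rw [projBeta, norm_sub_sq_real, ← real_inner_self_eq_norm_sq, ← real_inner_self_eq_norm_sq,
    inner_blockMean_self (by simp), real_inner_comm (blockMean _),
    inner_blockMean_esingle_of_notMem (by simp [Fin.le_def]),
    inner_esingle_self, Fin.card_Ici, show m + q + 3 - (m + 2) = q + 1 by omega]
  push_cast
  ring

end gap

theorem neg_two_mul_add_one_div_add_two_ne_intCast {n : ℕ} (hn : 1 ≤ n) (z : ℤ) :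
    -(2 * ((n : ℝ) + 1)) / ((n : ℝ) + 2) ≠ z := by
  intro hz
  have hpos : (0 : ℝ) < n + 2 := by positivity
  have hn' : (1 : ℝ) ≤ n := by exact_mod_cast hn
  have hlo : (-2 : ℝ) < z := by rw [← hz, lt_div_iff₀ hpos]; linarith
  have hhi : (z : ℝ) < -1 := by rw [← hz, div_lt_iff₀ hpos]; linarith
  have : (-2 : ℤ) < z ∧ z < -1 := ⟨by exact_mod_cast hlo, by exact_mod_cast hhi⟩
  omega

/-- With `m, q ≥ 1`, `N = m + q + 3`, `Θ` as above, `p` the orthogonal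
projection onto the orthogonal complement of the span of `Θ`, and the two consecutive
simple roots `α = e_{m+1} - e_{m+2}` and `β = e_{m+2} - e_{m+3}` (1-based; both outside
`Θ`): the projections `p α` and `p β` are computed explicitly, their inner product is
`-1`, their squared norms are `1 + 1/(m+1)` and `1 + 1/(q+1)`, the two Cartan numbers are
`-2(q+1)/(q+2)` and `-2(m+1)/(m+2)`, and neither Cartan number is an integer. -/
theorem statement13 (m q : ℕ) (hm : 1 ≤ m) (hq : 1 ≤ q)
    (p : EuclideanSpace ℝ (Fin (m + q + 3)) → EuclideanSpace ℝ (Fin (m + q + 3)))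
    (hp : ∀ v, p v =
      (Submodule.orthogonalProjection (Submodule.span ℝ (thetaSet m q))ᗮ v :
        EuclideanSpace ℝ (Fin (m + q + 3))))
    (α β : EuclideanSpace ℝ (Fin (m + q + 3)))
    (hα : α = esingle (m + q + 3) ⟨m, by omega⟩ - esingle (m + q + 3) ⟨m + 1, by omega⟩)
    (hβ : β = esingle (m + q + 3) ⟨m + 1, by omega⟩
        - esingle (m + q + 3) ⟨m + 2, by omega⟩) :
    (∀ j : Fin (m + q + 3),
      p α j = if (j : ℕ) ≤ m then 1 / ((m : ℝ) + 1)
        else if (j : ℕ) = m + 1 then -1 else 0) ∧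
    (∀ j : Fin (m + q + 3),
      p β j = if (j : ℕ) = m + 1 then 1
        else if m + 2 ≤ (j : ℕ) then -(1 / ((q : ℝ) + 1)) else 0) ∧
    (inner ℝ (p α) (p β) : ℝ) = -1 ∧
    ‖p α‖ ^ 2 = 1 + 1 / ((m : ℝ) + 1) ∧
    ‖p β‖ ^ 2 = 1 + 1 / ((q : ℝ) + 1) ∧
    2 * (inner ℝ (p α) (p β) : ℝ) / ‖p β‖ ^ 2 = -(2 * ((q : ℝ) + 1)) / ((q : ℝ) + 2) ∧
    2 * (inner ℝ (p α) (p β) : ℝ) / ‖p α‖ ^ 2 = -(2 * ((m : ℝ) + 1)) / ((m : ℝ) + 2) ∧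
    ¬ (∃ z : ℤ, 2 * (inner ℝ (p α) (p β) : ℝ) / ‖p β‖ ^ 2 = (z : ℝ)) ∧
    ¬ (∃ z : ℤ, 2 * (inner ℝ (p α) (p β) : ℝ) / ‖p α‖ ^ 2 = (z : ℝ)) := by
  have hpα : p α = projAlpha m q := by rw [hp, hα]; exact starProjection_alpha_eq_projAlpha
  have hpβ : p β = projBeta m q := by rw [hp, hβ]; exact starProjection_beta_eq_projBeta
  rw [hpα, hpβ]
  have hcartanβ : 2 * inner ℝ (projAlpha m q) (projBeta m q) / ‖projBeta m q‖ ^ 2 =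
      -(2 * ((q : ℝ) + 1)) / ((q : ℝ) + 2) := by
    rw [inner_projAlpha_projBeta, norm_projBeta_sq]
    field_simp
    ring
  have hcartanα : 2 * inner ℝ (projAlpha m q) (projBeta m q) / ‖projAlpha m q‖ ^ 2 =
      -(2 * ((m : ℝ) + 1)) / ((m : ℝ) + 2) := by
    rw [inner_projAlpha_projBeta, norm_projAlpha_sq]
    field_simp
    ring
  refine ⟨projAlpha_apply, projBeta_apply, inner_projAlpha_projBeta, norm_projAlpha_sq,
    norm_projBeta_sq, hcartanβ, hcartanα, ?_, ?_⟩
  · rw [hcartanβ]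
    exact fun ⟨z, hz⟩ => neg_two_mul_add_one_div_add_two_ne_intCast hq z hz
  · rw [hcartanα]
    exact fun ⟨z, hz⟩ => neg_two_mul_add_one_div_add_two_ne_intCast hm z hz
end
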